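/- arXiv:2307.04230 — 10 statements merged into one kernel-verified Lean document; each statement's English description precedes it below -/
import Mathlib

section
/- Let $\{G_n\}_{n\in\mathbb{N}}$ be a family of compact groups with $G_n \subseteq G_{n+1}$, and let $\{(V_n, \varphi_n)\}$ be a consistent sequence of orthogonal $G_n$-representations generated in degree $d$ (i.e., $\mathrm{span}\{g \cdot v : g \in G_n, v \in V_d\} = V_n$ for all $n \geq d$). Then for all $n \geq d$, the orthogonal projection $\mathcal{P}_{V_n} : V_{n+1}^{G_{n+1}} \to V_n^{G_n}$ restricted to invariant vectors is injective. -/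
open scoped RealInnerProductSpace

/-! A `G (n+1)`-invariant vector `u` killed by the projection onto `V n` is orthogonal to `V d`;
since the `ρ g` are isometries fixing `u`, it is then orthogonal to every translate `ρ g (V d)`,
hence to their span `V (n+1)`, which contains `u`. So `u = 0`, and the projection is injective
on invariants by linearity. -/

open Submodule

section OrbitSpan

variable {Γ : Type*} [Group Γ] {H : Type*} [NormedAddCommGroup H] [InnerProductSpace ℝ H]
  (ρ : Γ →* (H ≃ₗᵢ[ℝ] H))

theorem le_span_orbit (K : Subgroup Γ) (W : Submodule ℝ H) :
    W ≤ span ℝ {x : H | ∃ g ∈ K, ∃ v ∈ W, x = ρ g v} :=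
  fun v hv => subset_span ⟨1, K.one_mem, v, hv, by simp⟩

variable {ρ}

theorem mem_orthogonal_span_orbit {S : Set Γ} {W : Submodule ℝ H} {u : H} (hu : u ∈ Wᗮ)
    (hfix : ∀ g ∈ S, ρ g u = u) :
    u ∈ (span ℝ {x : H | ∃ g ∈ S, ∃ v ∈ W, x = ρ g v})ᗮ := by
  have hspan : span ℝ {x : H | ∃ g ∈ S, ∃ v ∈ W, x = ρ g v} ≤ (ℝ ∙ u)ᗮ := by
    rw [span_le]
    rintro _ ⟨g, hg, v, hv, rfl⟩
    rw [SetLike.mem_coe, mem_orthogonal_singleton_iff_inner_right, ← hfix g hg,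
      LinearIsometryEquiv.inner_map_map]
    exact inner_left_of_mem_orthogonal hv hu
  exact (mem_orthogonal' _ u).2 fun x hx => mem_orthogonal_singleton_iff_inner_right.1 (hspan hx)

theorem eq_zero_of_mem_span_orbit_of_mem_orthogonal {S : Set Γ} {W : Submodule ℝ H} {u : H}
    (hmem : u ∈ span ℝ {x : H | ∃ g ∈ S, ∃ v ∈ W, x = ρ g v}) (hu : u ∈ Wᗮ)
    (hfix : ∀ g ∈ S, ρ g u = u) : u = 0 :=
  inner_self_eq_zero.1 <| inner_right_of_mem_orthogonal hmem (mem_orthogonal_span_orbit hu hfix)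

end OrbitSpan

theorem projection_injective_on_invariants_general
    {Γ : Type*} [Group Γ] (G : ℕ → Subgroup Γ)
    {H : Type*} [NormedAddCommGroup H] [InnerProductSpace ℝ H] [FiniteDimensional ℝ H]
    (ρ : Γ →* (H ≃ₗᵢ[ℝ] H))
    (V : ℕ → Submodule ℝ H)
    (d : ℕ)
    (hgen : ∀ n, d ≤ n →
      V n = Submodule.span ℝ {x : H | ∃ g ∈ G n, ∃ v ∈ V d, x = ρ g v})
    (n : ℕ) (hn : d ≤ n) :
    ∀ v w : H, v ∈ V (n + 1) → w ∈ V (n + 1) →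
      (∀ g ∈ G (n + 1), ρ g v = v) → (∀ g ∈ G (n + 1), ρ g w = w) →
      Submodule.orthogonalProjectionOnto (V n) v = Submodule.orthogonalProjectionOnto (V n) w → v = w := by
  intro v w hv hw hvfix hwfix hproj
  have hVd : V d ≤ V n := hgen n hn ▸ le_span_orbit ρ (G n) (V d)
  have hmem : v - w ∈ V (n + 1) := sub_mem hv hw
  rw [hgen (n + 1) (by omega)] at hmem
  have hperp : v - w ∈ (V n)ᗮ := by
    rw [← orthogonalProjectionOnto_eq_zero_iff, map_sub, hproj, sub_self]
  rw [← sub_eq_zero]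
  refine eq_zero_of_mem_span_orbit_of_mem_orthogonal hmem (orthogonal_le hVd hperp) ?_
  intro g hg
  rw [map_sub, hvfix g hg, hwfix g hg]

/-- For a consistent sequence of orthogonal `G n`-representations
(modelled as nested submodules `V n` of an ambient real inner product space `H`,
with the groups `G n` realized inside an abstract group `Γ` acting by linear isometries
via `ρ`, the action of `G n` preserving `V m` for `m ≥ n`), generated in degree `d`,
the orthogonal projection onto `V n` is injective on `G (n+1)`-invariant vectors of
`V (n+1)`, for every `n ≥ d`. -/
theorem projection_injective_on_invariants
    {Γ : Type*} [Group Γ] (G : ℕ → Subgroup Γ) (hG : ∀ n, G n ≤ G (n + 1))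
    {H : Type*} [NormedAddCommGroup H] [InnerProductSpace ℝ H] [FiniteDimensional ℝ H]
    (ρ : Γ →* (H ≃ₗᵢ[ℝ] H))
    (V : ℕ → Submodule ℝ H) (hV : ∀ n, V n ≤ V (n + 1))
    (hact : ∀ n m, n ≤ m → ∀ g ∈ G n, ∀ v ∈ V m, ρ g v ∈ V m)
    (d : ℕ)
    (hgen : ∀ n, d ≤ n →
      V n = Submodule.span ℝ {x : H | ∃ g ∈ G n, ∃ v ∈ V d, x = ρ g v})
    (n : ℕ) (hn : d ≤ n) :
    ∀ v w : H, v ∈ V (n + 1) → w ∈ V (n + 1) →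
      (∀ g ∈ G (n + 1), ρ g v = v) → (∀ g ∈ G (n + 1), ρ g w = w) →
      Submodule.orthogonalProjectionOnto (V n) v = Submodule.orthogonalProjectionOnto (V n) w → v = w :=
  projection_injective_on_invariants_general G ρ V d hgen n hn
end

section
/- Let $\{G_n\}$ be a family of compact groups with $G_n \subseteq G_{n+1}$, and let $\{V_n\}$ be a consistent sequence of orthogonal $G_n$-representations generated in degree $d$. Then the sequence of dimensions $\dim V_n^{G_n}$ is nonincreasing for $n \geq d$, and hence eventually constant; consequently the projections $\mathcal{P}_{V_n} : V_{n+1}^{G_{n+1}} \to V_n^{G_n}$ are isomorphisms for all sufficiently large $n$. -/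
/-!
For `n ≥ d` the orthogonal projection `V (n+1)^{G (n+1)} → V n ^{G n}` is injective: a
`G (n+1)`-invariant vector orthogonal to `V n ⊇ V d` is orthogonal to every translate
`ρ g (V d)`, hence to their span `V (n+1)`, which contains it. So the dimensions of the
invariants decrease from `d` on and therefore stabilise, and once two consecutive ones agree
the injective projection is a bijection.
-/

open scoped RealInnerProductSpace

noncomputable section

/-- The subspace of `G`-invariant vectors of the `G`-subrepresentation `V`. -/
def invariantsIn {Γ : Type*} [Group Γ] {H : Type*} [NormedAddCommGroup H]
    [InnerProductSpace ℝ H] (ρ : Γ →* (H ≃ₗᵢ[ℝ] H)) (G : Subgroup Γ)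
    (V : Submodule ℝ H) : Submodule ℝ H where
  carrier := {x | x ∈ V ∧ ∀ g ∈ G, ρ g x = x}
  add_mem' := by
    rintro a b ⟨ha, ha'⟩ ⟨hb, hb'⟩
    exact ⟨V.add_mem ha hb, fun g hg => by simp [map_add, ha' g hg, hb' g hg]⟩
  zero_mem' := ⟨V.zero_mem, fun g hg => by simp⟩
  smul_mem' := by
    rintro c a ⟨ha, ha'⟩
    exact ⟨V.smul_mem c ha, fun g hg => by simp [map_smul, ha' g hg]⟩

open Submodule

section Invariants

variable {Γ H : Type*} [Group Γ] [NormedAddCommGroup H] [InnerProductSpace ℝ H]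
  (ρ : Γ →* (H ≃ₗᵢ[ℝ] H)) {G G' : Subgroup Γ} {W W' : Submodule ℝ H}

lemma map_eq_self_of_forall_apply_mem (hW : ∀ g ∈ G, ∀ v ∈ W, ρ g v ∈ W) {g : Γ}
    (hg : g ∈ G) :
    W.map ((ρ g).toLinearEquiv : H →ₗ[ℝ] H) = W := by
  refine le_antisymm (map_le_iff_le_comap.2 fun v hv ↦ hW g hg v hv) fun w hw ↦ ?_
  exact ⟨ρ g⁻¹ w, hW _ (G.inv_mem hg) w hw, by simp [map_inv, LinearIsometryEquiv.coe_inv]⟩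

lemma apply_starProjection_of_forall_apply_eq [W.HasOrthogonalProjection]
    (hW : ∀ g ∈ G, ∀ v ∈ W, ρ g v ∈ W) {x : H} (hx : ∀ g ∈ G, ρ g x = x) {g : Γ}
    (hg : g ∈ G) :
    ρ g (W.starProjection x) = W.starProjection x := by
  have hx' : (ρ g).symm x = x := (ρ g).symm_apply_eq.2 (hx g hg).symm
  have h := starProjection_map_apply (ρ g) W x
  simp only [map_eq_self_of_forall_apply_mem ρ hW hg, hx'] at h
  exact h.symm

lemma mem_orthogonal_span_orbit_s1 {x : H} (hx : ∀ g ∈ G, ρ g x = x) (hxW : x ∈ Wᗮ) :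
    x ∈ (span ℝ {y | ∃ g ∈ G, ∃ v ∈ W, y = ρ g v})ᗮ := by
  refine (mem_orthogonal' _ x).2 fun u hu ↦ ?_
  refine (span_le (p := LinearMap.ker (innerₛₗ ℝ x))).2 (fun y hy ↦ ?_) hu
  obtain ⟨g, hg, v, hv, rfl⟩ := hy
  change ⟪x, ρ g v⟫ = 0
  rw [← hx g hg, LinearIsometryEquiv.inner_map_map]
  exact (mem_orthogonal' W x).1 hxW v hv

variable (G W W') in
def invariantsProjection [W.HasOrthogonalProjection] (hGG' : G ≤ G')
    (hW : ∀ g ∈ G, ∀ v ∈ W, ρ g v ∈ W) :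
    invariantsIn ρ G' W' →ₗ[ℝ] invariantsIn ρ G W :=
  LinearMap.codRestrict _ (W.starProjection.toLinearMap ∘ₗ (invariantsIn ρ G' W').subtype)
    fun x ↦ ⟨W.starProjection_apply_mem x, fun _ hg ↦
      apply_starProjection_of_forall_apply_eq ρ hW (fun g hg ↦ x.2.2 g (hGG' hg)) hg⟩

lemma invariantsProjection_injective [W.HasOrthogonalProjection] (hGG' : G ≤ G')
    (hW : ∀ g ∈ G, ∀ v ∈ W, ρ g v ∈ W)
    (hW' : W' ≤ span ℝ {y | ∃ g ∈ G', ∃ v ∈ W, y = ρ g v}) :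
    Function.Injective (invariantsProjection ρ G W W' hGG' hW) := by
  rw [injective_iff_map_eq_zero]
  rintro ⟨x, hxW', hx⟩ hx0
  have hPx : W.starProjection x = 0 := congrArg Subtype.val hx0
  have hxW : x ∈ Wᗮ := orthogonalProjectionOnto_eq_zero_iff.1 (Subtype.ext hPx)
  have hxW'_perp : x ∈ W'ᗮ := orthogonal_le hW' (mem_orthogonal_span_orbit_s1 ρ hx hxW)
  exact Subtype.ext (disjoint_def.1 (orthogonal_disjoint W') x hxW' hxW'_perp)

lemma existsUnique_starProjection_eq_of_bijective [W.HasOrthogonalProjection] (hGG' : G ≤ G')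
    (hW : ∀ g ∈ G, ∀ v ∈ W, ρ g v ∈ W)
    (hbij : Function.Bijective (invariantsProjection ρ G W W' hGG' hW))
    {w : H} (hw : w ∈ invariantsIn ρ G W) :
    ∃! v : H, v ∈ invariantsIn ρ G' W' ∧ W.starProjection v = w := by
  obtain ⟨v, hv⟩ := hbij.2 ⟨w, hw⟩
  refine ⟨v, ⟨v.2, congrArg Subtype.val hv⟩, fun u ⟨hu, hup⟩ ↦ ?_⟩
  have hPu : invariantsProjection ρ G W W' hGG' hW ⟨u, hu⟩ = ⟨w, hw⟩ := Subtype.ext hup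
  exact congrArg Subtype.val (hbij.1 (hPu.trans hv.symm))

end Invariants

lemma exists_forall_ge_succ_eq_of_succ_le {α : Type*} [PartialOrder α] [WellFoundedLT α]
    {f : ℕ → α} {d : ℕ} (hf : ∀ n, d ≤ n → f (n + 1) ≤ f n) :
    ∃ N, ∀ n, N ≤ n → f (n + 1) = f n := by
  obtain ⟨k, hk⟩ := WellFoundedLT.antitone_chain_condition (f := fun k ↦ f (d + k))
    (antitone_nat_of_succ_le fun k ↦ hf (d + k) (Nat.le_add_right d k))
  refine ⟨d + k, fun n hn ↦ ?_⟩
  obtain ⟨m, rfl⟩ := Nat.exists_eq_add_of_le hn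
  have h₁ := hk (k + m + 1) (by omega)
  have h₂ := hk (k + m) (by omega)
  simp only [← add_assoc] at h₁ h₂
  rw [← h₁, ← h₂]

/-- For a consistent sequence generated in degree `d`, the dimensions
of the spaces of invariants are nonincreasing for `n ≥ d`; consequently they are
eventually constant and the orthogonal projections are isomorphisms between consecutive
spaces of invariants for all sufficiently large `n` (expressed via unique existence). -/
theorem invariant_dimensions_stabilize
    {Γ : Type*} [Group Γ] (G : ℕ → Subgroup Γ) (hG : ∀ n, G n ≤ G (n + 1))
    {H : Type*} [NormedAddCommGroup H] [InnerProductSpace ℝ H] [FiniteDimensional ℝ H]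
    (ρ : Γ →* (H ≃ₗᵢ[ℝ] H))
    (V : ℕ → Submodule ℝ H) (hV : ∀ n, V n ≤ V (n + 1))
    (hact : ∀ n m, n ≤ m → ∀ g ∈ G n, ∀ v ∈ V m, ρ g v ∈ V m)
    (d : ℕ)
    (hgen : ∀ n, d ≤ n →
      V n = Submodule.span ℝ {x : H | ∃ g ∈ G n, ∃ v ∈ V d, x = ρ g v}) :
    (∀ n, d ≤ n →
      Module.finrank ℝ (invariantsIn ρ (G (n + 1)) (V (n + 1))) ≤
        Module.finrank ℝ (invariantsIn ρ (G n) (V n))) ∧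
    (∃ N, ∀ n, N ≤ n → ∀ w ∈ invariantsIn ρ (G n) (V n),
      ∃! v : H, v ∈ invariantsIn ρ (G (n + 1)) (V (n + 1)) ∧
        (Submodule.orthogonalProjection (V n) v : H) = w) := by
  have hinj : ∀ n, d ≤ n → Function.Injective
      (invariantsProjection ρ (G n) (V n) (V (n + 1)) (hG n) (hact n n le_rfl)) := by
    intro n hn
    refine invariantsProjection_injective ρ _ _ ((hgen (n + 1) (by omega)).le.trans (span_mono ?_))
    rintro _ ⟨g, hg, v, hv, rfl⟩
    exact ⟨g, hg, v, monotone_nat_of_le_succ hV hn hv, rfl⟩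
  have hle := fun n hn ↦ LinearMap.finrank_le_finrank_of_injective (hinj n hn)
  refine ⟨hle, ?_⟩
  obtain ⟨N, hN⟩ := exists_forall_ge_succ_eq_of_succ_le
    (f := fun n ↦ Module.finrank ℝ (invariantsIn ρ (G n) (V n))) hle
  refine ⟨max d N, fun n hn w hw ↦ ?_⟩
  have hdn : d ≤ n := le_of_max_le_left hn
  have hsurj := (LinearMap.injective_iff_surjective_of_finrank_eq_finrank
    (hN n (le_of_max_le_right hn))).1 (hinj n hdn)
  exact existsUnique_starProjection_eq_of_bijective ρ _ _ ⟨hinj n hdn, hsurj⟩ hw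
end
end

section
/- Let $\{V_n\}$ be a consistent sequence and let $\{C_n \subseteq V_n\}$ be a sequence of convex bodies (compact convex sets containing the origin in their interior). Then the sequence $\{C_n\}$ is intersection-compatible (i.e., $C_{n+1} \cap V_n = C_n$ for all $n$) if and only if the polar sequence $\{C_n^\circ\}$ is projection-compatible (i.e., $\mathcal{P}_{V_n} C_{n+1}^\circ = C_n^\circ$ for all $n$), where the polar is taken inside $V_n$. -/
/-!
Both directions come from the bipolar theorem taken inside a subspace: for a closed convex
`C ⊆ K` containing `0` and `y ∈ K`, `y ∈ C` iff `⟪x, y⟫ ≤ 1` for every `x` in the polar of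
`C` in `K`. Since `⟪𝒫_K x, y⟫ = ⟪x, y⟫` for `y ∈ K`, testing `y ∈ V n` against
`𝒫_{V n} C_{n+1}°` is the same as testing it against `C_{n+1}°`. This gives the reverse
implication; applied to the compact convex set `𝒫_{V n} C_{n+1}°` it also gives the hard
inclusion of the forward one. Compactness of `C_{n+1}°` is where `0 ∈ int C_{n+1}` enters.
-/

open Set Metric
open scoped RealInnerProductSpace

section

variable {H : Type*} [NormedAddCommGroup H] [InnerProductSpace ℝ H]

/-- The polar of `C` taken inside `K`: `polarIn (V n) (C n)` is the paper's `C_n°`. -/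
def polarIn (K : Submodule ℝ H) (C : Set H) : Set H :=
  {x | x ∈ K ∧ ∀ y ∈ C, ⟪x, y⟫ ≤ 1}

section polarIn

variable {K : Submodule ℝ H} {C : Set H}

theorem zero_mem_polarIn : (0 : H) ∈ polarIn K C :=
  ⟨K.zero_mem, fun y _ => by simp⟩

theorem convex_polarIn : Convex ℝ (polarIn K C) := by
  rintro x ⟨hxK, hx⟩ x' ⟨hx'K, hx'⟩ a b ha hb hab
  refine ⟨K.add_mem (K.smul_mem a hxK) (K.smul_mem b hx'K), fun y hy => ?_⟩
  rw [inner_add_left, real_inner_smul_left, real_inner_smul_left]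
  nlinarith [hx y hy, hx' y hy]

theorem isClosed_polarIn (hK : IsClosed (K : Set H)) : IsClosed (polarIn K C) := by
  have : polarIn K C = (K : Set H) ∩ ⋂ y ∈ C, {x | ⟪x, y⟫ ≤ 1} := by
    ext; simp [polarIn]
  rw [this]
  exact hK.inter <| isClosed_biInter fun y _ =>
    isClosed_le (continuous_id.inner continuous_const) continuous_const

theorem mul_norm_le_one_of_mem_polarIn {r : ℝ} (hr : 0 < r)
    (hball : ∀ v ∈ K, ‖v‖ ≤ r → v ∈ C) {x : H} (hx : x ∈ polarIn K C) : r * ‖x‖ ≤ 1 := by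
  rcases eq_or_ne x 0 with rfl | hx0
  · simp
  have hnorm : 0 < ‖x‖ := norm_pos_iff.mpr hx0
  have hy : (r / ‖x‖) • x ∈ C := hball _ (K.smul_mem _ hx.1) <| by
    rw [norm_smul, Real.norm_of_nonneg (by positivity), div_mul_cancel₀ _ hnorm.ne']
  calc r * ‖x‖ = ⟪x, (r / ‖x‖) • x⟫ := by
        rw [real_inner_smul_right, real_inner_self_eq_norm_sq]; field_simp
    _ ≤ 1 := hx.2 _ hy

theorem isCompact_polarIn [FiniteDimensional ℝ H]
    (h0 : (0 : K) ∈ interior (((↑) : K → H) ⁻¹' C)) : IsCompact (polarIn K C) := by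
  obtain ⟨ε, hε, hsub⟩ := Metric.mem_nhds_iff.mp (mem_interior_iff_mem_nhds.mp h0)
  have hball : ∀ v ∈ K, ‖v‖ ≤ ε / 2 → v ∈ C := fun v hv hvε =>
    hsub (show (⟨v, hv⟩ : K) ∈ ball 0 ε by
      simpa using hvε.trans_lt (half_lt_self hε))
  refine isCompact_of_isClosed_isBounded (isClosed_polarIn K.closed_of_finiteDimensional)
    ((isBounded_iff_subset_closedBall 0).mpr ⟨2 / ε, fun x hx => ?_⟩)
  rw [mem_closedBall_zero_iff, le_div_iff₀ hε]
  linarith [mul_norm_le_one_of_mem_polarIn (half_pos hε) hball hx]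

end polarIn

theorem exists_inner_le_one_lt_inner [CompleteSpace H] {C : Set H} (hCconv : Convex ℝ C)
    (hCclosed : IsClosed C) (hC0 : (0 : H) ∈ C) {y : H} (hy : y ∉ C) :
    ∃ x : H, (∀ c ∈ C, ⟪x, c⟫ ≤ 1) ∧ 1 < ⟪x, y⟫ := by
  obtain ⟨f, u, hfC, hfy⟩ := geometric_hahn_banach_closed_point hCconv hCclosed hy
  have hu : 0 < u := by simpa using hfC 0 hC0
  refine ⟨u⁻¹ • (InnerProductSpace.toDual ℝ H).symm f, fun c hc => ?_, ?_⟩ <;>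
    rw [real_inner_smul_left, InnerProductSpace.toDual_symm_apply]
  · calc u⁻¹ * f c ≤ u⁻¹ * u := by gcongr; exact (hfC c hc).le
      _ = 1 := inv_mul_cancel₀ hu.ne'
  · calc (1 : ℝ) = u⁻¹ * u := (inv_mul_cancel₀ hu.ne').symm
      _ < u⁻¹ * f y := by gcongr

namespace Submodule

variable (K : Submodule ℝ H) [K.HasOrthogonalProjection]

theorem inner_starProjection_of_mem {y : H} (hy : y ∈ K) (x : H) :
    ⟪K.starProjection x, y⟫ = ⟪x, y⟫ := by
  rw [inner_starProjection_left_eq_right, K.starProjection_eq_self_iff.mpr hy]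

theorem starProjection_mem_polarIn {C : Set H} (hCK : C ⊆ K) {x : H}
    (hx : ∀ y ∈ C, ⟪x, y⟫ ≤ 1) : K.starProjection x ∈ polarIn K C :=
  ⟨K.starProjection_apply_mem x, fun y hy =>
    (K.inner_starProjection_of_mem (hCK hy) x).trans_le (hx y hy)⟩

theorem mem_iff_forall_mem_polarIn [CompleteSpace H] {C : Set H} (hCconv : Convex ℝ C)
    (hCclosed : IsClosed C) (hC0 : (0 : H) ∈ C) (hCK : C ⊆ K) {y : H} (hy : y ∈ K) :
    y ∈ C ↔ ∀ x ∈ polarIn K C, ⟪x, y⟫ ≤ 1 := by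
  refine ⟨fun hyC x hx => hx.2 y hyC, fun hpolar => ?_⟩
  by_contra hyC
  obtain ⟨x, hxC, hxy⟩ := exists_inner_le_one_lt_inner hCconv hCclosed hC0 hyC
  have := hpolar _ (K.starProjection_mem_polarIn hCK hxC)
  rw [K.inner_starProjection_of_mem hy] at this
  linarith

theorem image_starProjection_polarIn_subset {L : Submodule ℝ H} {C D : Set H} (hCD : C ⊆ D)
    (hCK : C ⊆ K) : K.starProjection '' polarIn L D ⊆ polarIn K C := by
  rintro _ ⟨x, hx, rfl⟩
  exact K.starProjection_mem_polarIn hCK fun y hy => hx.2 y (hCD hy)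

variable [CompleteSpace H] {K}

theorem polarIn_inter_subset_image_starProjection {L : Submodule ℝ H} (hKL : K ≤ L)
    [L.HasOrthogonalProjection] {C : Set H} (hCconv : Convex ℝ C) (hCclosed : IsClosed C)
    (hC0 : (0 : H) ∈ C) (hCL : C ⊆ L) (hcpt : IsCompact (polarIn L C)) :
    polarIn K (C ∩ K) ⊆ K.starProjection '' polarIn L C := by
  set Q := K.starProjection '' polarIn L C
  have hQK : Q ⊆ K := image_subset_iff.mpr fun x _ => K.starProjection_apply_mem x
  have hQconv : Convex ℝ Q := convex_polarIn.linear_image (K.starProjection : H →ₗ[ℝ] H)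
  have hQclosed : IsClosed Q := (hcpt.image K.starProjection.continuous).isClosed
  have hQ0 : (0 : H) ∈ Q := ⟨0, zero_mem_polarIn, map_zero _⟩
  intro z hz
  rw [K.mem_iff_forall_mem_polarIn hQconv hQclosed hQ0 hQK hz.1]
  intro w hw
  have hwC : w ∈ C := by
    refine (L.mem_iff_forall_mem_polarIn hCconv hCclosed hC0 hCL (hKL hw.1)).mpr fun x hx => ?_
    rw [← K.inner_starProjection_of_mem hw.1, real_inner_comm]
    exact hw.2 _ ⟨x, hx, rfl⟩
  rw [real_inner_comm]
  exact hz.2 w ⟨hwC, hw.1⟩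

theorem mem_iff_of_image_starProjection_polarIn_eq {L : Submodule ℝ H} (hKL : K ≤ L)
    [L.HasOrthogonalProjection] {C D : Set H} (hCconv : Convex ℝ C) (hCclosed : IsClosed C)
    (hC0 : (0 : H) ∈ C) (hCK : C ⊆ K) (hDconv : Convex ℝ D) (hDclosed : IsClosed D)
    (hD0 : (0 : H) ∈ D) (hDL : D ⊆ L) (hP : K.starProjection '' polarIn L D = polarIn K C)
    {y : H} (hy : y ∈ K) :
    y ∈ D ↔ y ∈ C := by
  rw [L.mem_iff_forall_mem_polarIn hDconv hDclosed hD0 hDL (hKL hy),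
    K.mem_iff_forall_mem_polarIn hCconv hCclosed hC0 hCK hy, ← hP]
  simp only [forall_mem_image, K.inner_starProjection_of_mem hy]

end Submodule

end

/-- For a sequence of convex bodies `C n ⊆ V n` in a consistent sequence
of nested finite-dimensional inner product spaces, intersection compatibility of `{C n}`
(`C (n+1) ∩ V n = C n`) is equivalent to projection compatibility of the polar sequence
(`𝒫_{V n} '' (C (n+1))° = (C n)°`), polars being taken inside `V n`. -/
theorem polar_duality_intersection_projection
    {H : Type*} [NormedAddCommGroup H] [InnerProductSpace ℝ H] [FiniteDimensional ℝ H]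
    (V : ℕ → Submodule ℝ H) (hV : ∀ n, V n ≤ V (n + 1))
    (C : ℕ → Set H) (hCV : ∀ n, C n ⊆ (V n : Set H))
    (hconv : ∀ n, Convex ℝ (C n)) (hcpt : ∀ n, IsCompact (C n))
    (h0 : ∀ n, (0 : V n) ∈ interior (((↑) : V n → H) ⁻¹' C n)) :
    (∀ n, C (n + 1) ∩ (V n : Set H) = C n) ↔
      (∀ n, (fun x : H => (Submodule.orthogonalProjection (V n) x : H)) ''
          {x : H | x ∈ V (n + 1) ∧ ∀ y ∈ C (n + 1), inner (𝕜 := ℝ) x y ≤ 1} =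
        {x : H | x ∈ V n ∧ ∀ y ∈ C n, inner (𝕜 := ℝ) x y ≤ 1}) := by
  have hclosed n : IsClosed (C n) := (hcpt n).isClosed
  have hzero n : (0 : H) ∈ C n := by simpa using interior_subset (h0 n)
  change (∀ n, C (n + 1) ∩ V n = C n) ↔
    ∀ n, (V n).starProjection '' polarIn (V (n + 1)) (C (n + 1)) = polarIn (V n) (C n)
  refine ⟨fun hI n => ?_, fun hP n => ?_⟩
  · refine ((V n).image_starProjection_polarIn_subset (hI n ▸ inter_subset_left)
      (hCV n)).antisymm ?_
    rw [← hI n]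
    exact Submodule.polarIn_inter_subset_image_starProjection (hV n) (hconv _) (hclosed _)
      (hzero _) (hCV _) (isCompact_polarIn (h0 _))
  · have key {y : H} (hy : y ∈ V n) : y ∈ C (n + 1) ↔ y ∈ C n :=
      Submodule.mem_iff_of_image_starProjection_polarIn_eq (hV n) (hconv n) (hclosed n)
        (hzero n) (hCV n) (hconv _) (hclosed _) (hzero _) (hCV _) (hP n) hy
    ext y
    exact ⟨fun ⟨hy, hyV⟩ => (key hyV).mp hy,
      fun hy => ⟨(key (hCV n hy)).mpr hy, hCV n hy⟩⟩
end

section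
/- Let $\{V_n\}, \{W_n\}, \{U_n\}$ be consistent sequences of $\{G_n\}$-representations, let $\{K_n \subseteq U_n\}$ be a sequence of convex cones that is both intersection-compatible ($K_{n+1} \cap U_n = K_n$) and projection-compatible ($\mathcal{P}_{U_n} K_{n+1} = K_n$), and let $C_n = \{x \in V_n : \exists y \in W_n \text{ s.t. } A_n x + B_n y + u_n \in K_n\}$. Assume $\{A_n\}$, $\{B_n\}$, $\{B_n^*\}$ are morphisms of sequences, $\{u_n\}$ is a freely-described element (i.e., $u_n \in U_n^{G_n}$ with $\mathcal{P}_{U_n}(u_{n+1}) = u_n$), and $u_{n+1} - u_n \in K_{n+1}$ for all $n$. Then the sequence $\{C_n\}$ is intersection-compatible: $C_{n+1} \cap V_n = C_n$ for all $n$. -/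
/-!
Projecting a certificate `y` at level `n + 1` gives the certificate `𝒫_{Wₙ} y` at level `n`: for
`x ∈ Vₙ` we have `𝒫_{Uₙ} A_{n+1} x = Aₙ x` since `Aₙ x ∈ Uₙ`, `𝒫_{Uₙ} B_{n+1} = Bₙ 𝒫_{Wₙ}` because
`{Bₙ*}` is a morphism, `𝒫_{Uₙ} u_{n+1} = uₙ`, and `𝒫_{Uₙ} K_{n+1} = Kₙ`. Conversely a certificate
`y` at level `n` stays one at level `n + 1`, since `A_{n+1} x + B_{n+1} y + u_{n+1}` is the sum of
`Aₙ x + Bₙ y + uₙ ∈ Kₙ ⊆ K_{n+1}` and `u_{n+1} - uₙ ∈ K_{n+1}`.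
-/

open Set

section CertifiedSet

variable {E F H : Type*} [AddCommGroup E] [Module ℝ E]
  [NormedAddCommGroup F] [InnerProductSpace ℝ F]
  [NormedAddCommGroup H] [InnerProductSpace ℝ H]

def certifiedSet (V : Submodule ℝ E) (W : Submodule ℝ F) (A : E →ₗ[ℝ] H) (B : F →ₗ[ℝ] H)
    (u : H) (K : Set H) : Set E :=
  {x | x ∈ V ∧ ∃ y ∈ W, A x + B y + u ∈ K}

theorem certifiedSet_subset_certifiedSet {V V' : Submodule ℝ E} {W W' : Submodule ℝ F}
    {A A' : E →ₗ[ℝ] H} {B B' : F →ₗ[ℝ] H} {u u' : H} {K : Set H} {K' : ConvexCone ℝ H}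
    (hV : V ≤ V') (hW : W ≤ W') (hA : ∀ v ∈ V, A' v = A v) (hB : ∀ w ∈ W, B' w = B w)
    (hK : K ⊆ K') (hu : u' - u ∈ K') :
    certifiedSet V W A B u K ⊆ certifiedSet V' W' A' B' u' K' := by
  rintro x ⟨hx, y, hy, hxy⟩
  refine ⟨hV hx, y, hW hy, ?_⟩
  have hsplit : A' x + B' y + u' = (A x + B y + u) + (u' - u) := by
    rw [hA x hx, hB y hy]
    abel
  rw [hsplit]
  exact K'.add_mem (hK hxy) hu

theorem certifiedSet_inter_subset_of_orthogonalProjection {V V' : Submodule ℝ E}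
    {W W' : Submodule ℝ F} [W.HasOrthogonalProjection] {U : Submodule ℝ H}
    [U.HasOrthogonalProjection] {A A' : E →ₗ[ℝ] H} {B B' : F →ₗ[ℝ] H} {u u' : H}
    {K K' : Set H} (hAU : ∀ v ∈ V, A v ∈ U) (hA : ∀ v ∈ V, A' v = A v)
    (hB : ∀ w ∈ W', (U.orthogonalProjectionOnto (B' w) : H) = B (W.orthogonalProjectionOnto w))
    (hu : (U.orthogonalProjectionOnto u' : H) = u)
    (hK : (fun z : H => (U.orthogonalProjectionOnto z : H)) '' K' ⊆ K) :
    certifiedSet V' W' A' B' u' K' ∩ V ⊆ certifiedSet V W A B u K := by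
  rintro x ⟨⟨-, y, hy, hxy⟩, hx⟩
  refine ⟨hx, W.orthogonalProjectionOnto y, (W.orthogonalProjectionOnto y).2, ?_⟩
  have hAx : (U.orthogonalProjectionOnto (A' x) : H) = A x := by
    rw [hA x hx]
    exact congrArg Subtype.val (U.orthogonalProjectionOnto_mem_subspace_eq_self ⟨_, hAU x hx⟩)
  have hproj := hK (mem_image_of_mem _ hxy)
  simpa only [map_add, Submodule.coe_add, hAx, hB y hy, hu] using hproj

end CertifiedSet

theorem certified_intersection_compatibility_general
    {HV HW HU : Type*}
    [NormedAddCommGroup HV] [InnerProductSpace ℝ HV]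
    [NormedAddCommGroup HW] [InnerProductSpace ℝ HW] [FiniteDimensional ℝ HW]
    [NormedAddCommGroup HU] [InnerProductSpace ℝ HU] [FiniteDimensional ℝ HU]
    (V : ℕ → Submodule ℝ HV) (hV : ∀ n, V n ≤ V (n + 1))
    (W : ℕ → Submodule ℝ HW) (hW : ∀ n, W n ≤ W (n + 1))
    (U : ℕ → Submodule ℝ HU)
    (K : ℕ → ConvexCone ℝ HU)
    (hKint : ∀ n, (K (n + 1) : Set HU) ∩ (U n : Set HU) = (K n : Set HU))
    (hKproj : ∀ n, (fun x : HU => (Submodule.orthogonalProjectionOnto (U n) x : HU)) ''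
        (K (n + 1) : Set HU) = (K n : Set HU))
    (A : ℕ → HV →ₗ[ℝ] HU) (B : ℕ → HW →ₗ[ℝ] HU)
    (hAmaps : ∀ n, ∀ v ∈ V n, A n v ∈ U n)
    (hAcompat : ∀ n, ∀ v ∈ V n, A (n + 1) v = A n v)
    (hBcompat : ∀ n, ∀ w ∈ W n, B (n + 1) w = B n w)
    (hBadj : ∀ n, ∀ w ∈ W (n + 1),
      (Submodule.orthogonalProjectionOnto (U n) (B (n + 1) w) : HU)
        = B n (Submodule.orthogonalProjectionOnto (W n) w))
    (u : ℕ → HU)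
    (hufree : ∀ n, (Submodule.orthogonalProjectionOnto (U n) (u (n + 1)) : HU) = u n)
    (hucone : ∀ n, u (n + 1) - u n ∈ K (n + 1)) :
    ∀ n, {x : HV | x ∈ V (n + 1) ∧
            ∃ y ∈ W (n + 1), A (n + 1) x + B (n + 1) y + u (n + 1) ∈ K (n + 1)}
          ∩ (V n : Set HV)
        = {x : HV | x ∈ V n ∧ ∃ y ∈ W n, A n x + B n y + u n ∈ K n} := by
  intro n
  have hKmono : (K n : Set HU) ⊆ K (n + 1) := hKint n ▸ inter_subset_left
  exact Subset.antisymm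
    (certifiedSet_inter_subset_of_orthogonalProjection (hAmaps n) (hAcompat n) (hBadj n)
      (hufree n) (hKproj n).subset)
    (subset_inter
      (certifiedSet_subset_certifiedSet (hV n) (hW n) (hAcompat n) (hBcompat n) hKmono
        (hucone n))
      fun _ hx => hx.1)

/-- (Theorem on certificates of intersection compatibility.)
Given consistent sequences `{V n}, {W n}, {U n}` of `{G n}`-representations, a sequence of
convex cones `{K n ⊆ U n}` that is both intersection- and projection-compatible, and the
sets `C n = {x ∈ V n | ∃ y ∈ W n, A n x + B n y + u n ∈ K n}`, if `{A n}`, `{B n}`, `{B n *}`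
are morphisms of sequences, `{u n}` is a freely-described element, and
`u (n+1) - u n ∈ K (n+1)` for all `n`, then `{C n}` is intersection-compatible. -/
theorem certified_intersection_compatibility
    {Γ : Type*} [Group Γ] (G : ℕ → Subgroup Γ) (hG : ∀ n, G n ≤ G (n + 1))
    {HV HW HU : Type*}
    [NormedAddCommGroup HV] [InnerProductSpace ℝ HV] [FiniteDimensional ℝ HV]
    [NormedAddCommGroup HW] [InnerProductSpace ℝ HW] [FiniteDimensional ℝ HW]
    [NormedAddCommGroup HU] [InnerProductSpace ℝ HU] [FiniteDimensional ℝ HU]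
    (ρV : Γ →* (HV ≃ₗᵢ[ℝ] HV)) (ρW : Γ →* (HW ≃ₗᵢ[ℝ] HW)) (ρU : Γ →* (HU ≃ₗᵢ[ℝ] HU))
    (V : ℕ → Submodule ℝ HV) (hV : ∀ n, V n ≤ V (n + 1))
    (W : ℕ → Submodule ℝ HW) (hW : ∀ n, W n ≤ W (n + 1))
    (U : ℕ → Submodule ℝ HU) (hU : ∀ n, U n ≤ U (n + 1))
    (hactV : ∀ n m, n ≤ m → ∀ g ∈ G n, ∀ v ∈ V m, ρV g v ∈ V m)
    (hactW : ∀ n m, n ≤ m → ∀ g ∈ G n, ∀ w ∈ W m, ρW g w ∈ W m)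
    (hactU : ∀ n m, n ≤ m → ∀ g ∈ G n, ∀ u ∈ U m, ρU g u ∈ U m)
    (K : ℕ → ConvexCone ℝ HU)
    (hKU : ∀ n, (K n : Set HU) ⊆ (U n : Set HU))
    (hKinv : ∀ n, ∀ g ∈ G n, ∀ x ∈ K n, ρU g x ∈ K n)
    (hKint : ∀ n, (K (n + 1) : Set HU) ∩ (U n : Set HU) = (K n : Set HU))
    (hKproj : ∀ n, (fun x : HU => (Submodule.orthogonalProjectionOnto (U n) x : HU)) ''
        (K (n + 1) : Set HU) = (K n : Set HU))
    (A : ℕ → HV →ₗ[ℝ] HU) (B : ℕ → HW →ₗ[ℝ] HU)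
    (hAmaps : ∀ n, ∀ v ∈ V n, A n v ∈ U n)
    (hAequiv : ∀ n, ∀ g ∈ G n, ∀ v ∈ V n, A n (ρV g v) = ρU g (A n v))
    (hAcompat : ∀ n, ∀ v ∈ V n, A (n + 1) v = A n v)
    (hBmaps : ∀ n, ∀ w ∈ W n, B n w ∈ U n)
    (hBequiv : ∀ n, ∀ g ∈ G n, ∀ w ∈ W n, B n (ρW g w) = ρU g (B n w))
    (hBcompat : ∀ n, ∀ w ∈ W n, B (n + 1) w = B n w)
    (hBadj : ∀ n, ∀ w ∈ W (n + 1),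
      (Submodule.orthogonalProjectionOnto (U n) (B (n + 1) w) : HU)
        = B n (Submodule.orthogonalProjectionOnto (W n) w))
    (u : ℕ → HU)
    (humem : ∀ n, u n ∈ U n)
    (huinv : ∀ n, ∀ g ∈ G n, ρU g (u n) = u n)
    (hufree : ∀ n, (Submodule.orthogonalProjectionOnto (U n) (u (n + 1)) : HU) = u n)
    (hucone : ∀ n, u (n + 1) - u n ∈ K (n + 1)) :
    ∀ n, {x : HV | x ∈ V (n + 1) ∧
            ∃ y ∈ W (n + 1), A (n + 1) x + B (n + 1) y + u (n + 1) ∈ K (n + 1)}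
          ∩ (V n : Set HV)
        = {x : HV | x ∈ V n ∧ ∃ y ∈ W n, A n x + B n y + u n ∈ K n} :=
  certified_intersection_compatibility_general V hV W hW U K hKint hKproj A B hAmaps hAcompat
    hBcompat hBadj u hufree hucone
end

section
/- In the setting of the previous construction (consistent sequences $\{V_n\},\{W_n\},\{U_n\}$, intersection- and projection-compatible cones $\{K_n\}$, $C_n = \{x : \exists y, A_n x + B_n y + u_n \in K_n\}$, with $\{A_n\},\{B_n\},\{B_n^*\}$ morphisms, $\{u_n\}$ freely-described, and $u_{n+1}-u_n \in K_{n+1}$), if additionally $\{A_n^*\}$ is a morphism of sequences, then the sequence $\{C_n\}$ is projection-compatible: $\mathcal{P}_{V_n} C_{n+1} = C_n$ for all $n$. -/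
/-!
Applying `𝒫_{U n}` to a certificate `A x + B y + u ∈ K (n+1)` of `x` yields a certificate
`A x' + B y' + u ∈ K n` of `x' = 𝒫_{V n} x`, with `y' = 𝒫_{W n} y`, because `{A n*}`, `{B n*}`
are morphisms, `{u n}` is freely described and `𝒫_{U n} K (n+1) = K n`. Conversely, a certificate
at level `n` becomes one at level `n+1` after adding `u (n+1) - u n ∈ K (n+1)`, since
`K n ⊆ K (n+1)` and a cone is closed under addition.
-/

open Submodule

section

variable {HV HW HU : Type*}
  [NormedAddCommGroup HV] [InnerProductSpace ℝ HV]
  [NormedAddCommGroup HW] [InnerProductSpace ℝ HW]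
  [NormedAddCommGroup HU] [InnerProductSpace ℝ HU]

def conicLift (V : Submodule ℝ HV) (W : Submodule ℝ HW) (A : HV →ₗ[ℝ] HU) (B : HW →ₗ[ℝ] HU)
    (u : HU) (K : Set HU) : Set HV :=
  {x | x ∈ V ∧ ∃ y ∈ W, A x + B y + u ∈ K}

theorem starProjection_image_conicLift_subset
    {V V' : Submodule ℝ HV} {W W' : Submodule ℝ HW} {U : Submodule ℝ HU}
    [V.HasOrthogonalProjection] [W.HasOrthogonalProjection] [U.HasOrthogonalProjection]
    {A A' : HV →ₗ[ℝ] HU} {B B' : HW →ₗ[ℝ] HU} {u u' : HU} {K K' : Set HU}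
    (hA : ∀ v ∈ V', U.starProjection (A' v) = A (V.starProjection v))
    (hB : ∀ w ∈ W', U.starProjection (B' w) = B (W.starProjection w))
    (hu : U.starProjection u' = u) (hK : U.starProjection '' K' ⊆ K) :
    V.starProjection '' conicLift V' W' A' B' u' K' ⊆ conicLift V W A B u K := by
  rintro _ ⟨x, ⟨hx, y, hy, hxy⟩, rfl⟩
  refine ⟨starProjection_apply_mem V x, W.starProjection y, starProjection_apply_mem W y, ?_⟩
  have hproj := hK (Set.mem_image_of_mem U.starProjection hxy)
  rwa [map_add, map_add, hA x hx, hB y hy, hu] at hproj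

theorem conicLift_subset_starProjection_image
    {V V' : Submodule ℝ HV} {W W' : Submodule ℝ HW} [V.HasOrthogonalProjection]
    {A A' : HV →ₗ[ℝ] HU} {B B' : HW →ₗ[ℝ] HU} {u u' : HU} {K : Set HU} {K' : ConvexCone ℝ HU}
    (hV : V ≤ V') (hW : W ≤ W') (hA : ∀ v ∈ V, A' v = A v) (hB : ∀ w ∈ W, B' w = B w)
    (hK : K ⊆ K') (hu : u' - u ∈ K') :
    conicLift V W A B u K ⊆ V.starProjection '' conicLift V' W' A' B' u' K' := by
  rintro x ⟨hx, y, hy, hxy⟩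
  refine ⟨x, ⟨hV hx, y, hW hy, ?_⟩, starProjection_eq_self_iff.mpr hx⟩
  have hsplit : A' x + B' y + u' = (A x + B y + u) + (u' - u) := by
    rw [hA x hx, hB y hy]; abel
  rw [hsplit]
  exact K'.add_mem (hK hxy) hu

end

theorem certified_projection_compatibility_general
    {HV HW HU : Type*}
    [NormedAddCommGroup HV] [InnerProductSpace ℝ HV] [FiniteDimensional ℝ HV]
    [NormedAddCommGroup HW] [InnerProductSpace ℝ HW] [FiniteDimensional ℝ HW]
    [NormedAddCommGroup HU] [InnerProductSpace ℝ HU] [FiniteDimensional ℝ HU]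
    (V : ℕ → Submodule ℝ HV) (hV : ∀ n, V n ≤ V (n + 1))
    (W : ℕ → Submodule ℝ HW) (hW : ∀ n, W n ≤ W (n + 1))
    (U : ℕ → Submodule ℝ HU)
    (K : ℕ → ConvexCone ℝ HU)
    (hKint : ∀ n, (K (n + 1) : Set HU) ∩ (U n : Set HU) = (K n : Set HU))
    (hKproj : ∀ n, (fun x : HU => (Submodule.orthogonalProjectionOnto (U n) x : HU)) ''
        (K (n + 1) : Set HU) = (K n : Set HU))
    (A : ℕ → HV →ₗ[ℝ] HU) (B : ℕ → HW →ₗ[ℝ] HU)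
    (hAcompat : ∀ n, ∀ v ∈ V n, A (n + 1) v = A n v)
    (hAadj : ∀ n, ∀ v ∈ V (n + 1),
      (Submodule.orthogonalProjectionOnto (U n) (A (n + 1) v) : HU)
        = A n (Submodule.orthogonalProjectionOnto (V n) v))
    (hBcompat : ∀ n, ∀ w ∈ W n, B (n + 1) w = B n w)
    (hBadj : ∀ n, ∀ w ∈ W (n + 1),
      (Submodule.orthogonalProjectionOnto (U n) (B (n + 1) w) : HU)
        = B n (Submodule.orthogonalProjectionOnto (W n) w))
    (u : ℕ → HU)
    (hufree : ∀ n, (Submodule.orthogonalProjectionOnto (U n) (u (n + 1)) : HU) = u n)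
    (hucone : ∀ n, u (n + 1) - u n ∈ K (n + 1)) :
    ∀ n, (fun x : HV => (Submodule.orthogonalProjectionOnto (V n) x : HV)) ''
          {x : HV | x ∈ V (n + 1) ∧
            ∃ y ∈ W (n + 1), A (n + 1) x + B (n + 1) y + u (n + 1) ∈ K (n + 1)}
        = {x : HV | x ∈ V n ∧ ∃ y ∈ W n, A n x + B n y + u n ∈ K n} := by
  intro n
  have hKmono : (K n : Set HU) ⊆ K (n + 1) := hKint n ▸ Set.inter_subset_left
  exact Set.Subset.antisymm
    (starProjection_image_conicLift_subset (hAadj n) (hBadj n) (hufree n) (hKproj n).subset)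
    (conicLift_subset_starProjection_image (hV n) (hW n) (hAcompat n) (hBcompat n) hKmono
      (hucone n))

/-- In the setting of Theorem on certified compatibility (consistent
sequences `{V n}, {W n}, {U n}`, intersection- and projection-compatible cones `{K n}`,
`C n = {x | ∃ y, A n x + B n y + u n ∈ K n}`, with `{A n}, {B n}, {B n *}` morphisms,
`{u n}` freely described, and `u (n+1) - u n ∈ K (n+1)`), if additionally `{A n *}` is a
morphism of sequences, then the sequence `{C n}` is projection-compatible:
`𝒫_{V n} '' C (n+1) = C n` for all `n`. -/
theorem certified_projection_compatibility
    {Γ : Type*} [Group Γ] (G : ℕ → Subgroup Γ) (hG : ∀ n, G n ≤ G (n + 1))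
    {HV HW HU : Type*}
    [NormedAddCommGroup HV] [InnerProductSpace ℝ HV] [FiniteDimensional ℝ HV]
    [NormedAddCommGroup HW] [InnerProductSpace ℝ HW] [FiniteDimensional ℝ HW]
    [NormedAddCommGroup HU] [InnerProductSpace ℝ HU] [FiniteDimensional ℝ HU]
    (ρV : Γ →* (HV ≃ₗᵢ[ℝ] HV)) (ρW : Γ →* (HW ≃ₗᵢ[ℝ] HW)) (ρU : Γ →* (HU ≃ₗᵢ[ℝ] HU))
    (V : ℕ → Submodule ℝ HV) (hV : ∀ n, V n ≤ V (n + 1))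
    (W : ℕ → Submodule ℝ HW) (hW : ∀ n, W n ≤ W (n + 1))
    (U : ℕ → Submodule ℝ HU) (hU : ∀ n, U n ≤ U (n + 1))
    (hactV : ∀ n m, n ≤ m → ∀ g ∈ G n, ∀ v ∈ V m, ρV g v ∈ V m)
    (hactW : ∀ n m, n ≤ m → ∀ g ∈ G n, ∀ w ∈ W m, ρW g w ∈ W m)
    (hactU : ∀ n m, n ≤ m → ∀ g ∈ G n, ∀ u ∈ U m, ρU g u ∈ U m)
    (K : ℕ → ConvexCone ℝ HU)
    (hKU : ∀ n, (K n : Set HU) ⊆ (U n : Set HU))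
    (hKinv : ∀ n, ∀ g ∈ G n, ∀ x ∈ K n, ρU g x ∈ K n)
    (hKint : ∀ n, (K (n + 1) : Set HU) ∩ (U n : Set HU) = (K n : Set HU))
    (hKproj : ∀ n, (fun x : HU => (Submodule.orthogonalProjectionOnto (U n) x : HU)) ''
        (K (n + 1) : Set HU) = (K n : Set HU))
    (A : ℕ → HV →ₗ[ℝ] HU) (B : ℕ → HW →ₗ[ℝ] HU)
    (hAmaps : ∀ n, ∀ v ∈ V n, A n v ∈ U n)
    (hAequiv : ∀ n, ∀ g ∈ G n, ∀ v ∈ V n, A n (ρV g v) = ρU g (A n v))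
    (hAcompat : ∀ n, ∀ v ∈ V n, A (n + 1) v = A n v)
    (hAadj : ∀ n, ∀ v ∈ V (n + 1),
      (Submodule.orthogonalProjectionOnto (U n) (A (n + 1) v) : HU)
        = A n (Submodule.orthogonalProjectionOnto (V n) v))
    (hBmaps : ∀ n, ∀ w ∈ W n, B n w ∈ U n)
    (hBequiv : ∀ n, ∀ g ∈ G n, ∀ w ∈ W n, B n (ρW g w) = ρU g (B n w))
    (hBcompat : ∀ n, ∀ w ∈ W n, B (n + 1) w = B n w)
    (hBadj : ∀ n, ∀ w ∈ W (n + 1),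
      (Submodule.orthogonalProjectionOnto (U n) (B (n + 1) w) : HU)
        = B n (Submodule.orthogonalProjectionOnto (W n) w))
    (u : ℕ → HU)
    (humem : ∀ n, u n ∈ U n)
    (huinv : ∀ n, ∀ g ∈ G n, ρU g (u n) = u n)
    (hufree : ∀ n, (Submodule.orthogonalProjectionOnto (U n) (u (n + 1)) : HU) = u n)
    (hucone : ∀ n, u (n + 1) - u n ∈ K (n + 1)) :
    ∀ n, (fun x : HV => (Submodule.orthogonalProjectionOnto (V n) x : HV)) ''
          {x : HV | x ∈ V (n + 1) ∧
            ∃ y ∈ W (n + 1), A (n + 1) x + B (n + 1) y + u (n + 1) ∈ K (n + 1)}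
        = {x : HV | x ∈ V n ∧ ∃ y ∈ W n, A n x + B n y + u n ∈ K n} :=
  certified_projection_compatibility_general V hV W hW U K hKint hKproj A B hAcompat hAadj hBcompat
    hBadj u hufree hucone
end

section
/- Let $\{V_n\},\{W_n\},\{U_n\}$ be consistent sequences of $\{G_n\}$-representations, $\{K_n \subseteq U_n\}$ intersection- and projection-compatible convex cones, and $C_n = \{x \in V_n : \exists y \in W_n,\ A_n x + B_n y + u_n \in K_n\}$. Suppose $\{A_n\},\{A_n^*\},\{B_n\},\{B_n^*\}$ are all morphisms of sequences, $\{u_n\}$ is freely-described, and $u_{n+1} - u_n \in K_{n+1} + A_{n+1}(V_n^\perp) + B_{n+1}(W_n)$ for all $n$. Then $\{C_n\}$ is projection-compatible: $\mathcal{P}_{V_n} C_{n+1} = C_n$. -/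
/-!
Projecting a feasible point `x ∈ C (n+1)` with witness `y` onto level `n` keeps it feasible
with witness `𝒫 y`: the adjoint-morphism conditions and `𝒫 u (n+1) = u n` make `𝒫` carry
`A x + B y + u` at level `n+1` to the corresponding expression at level `n`, and projection
compatibility of the cones keeps it in the cone. Conversely, for `x ∈ C n` write
`u (n+1) - u n = k + A z + B w` with `z ⊥ V n`; then `x - z ∈ C (n+1)` with witness `y - w`,
since the slack changes by `k ∈ K (n+1)` and `K n ⊆ K (n+1)`, and `𝒫 (x - z) = x`.
-/

open Submodule

def conicLiftSet {HV HW HU : Type*} [AddCommGroup HV] [Module ℝ HV] [AddCommGroup HW]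
    [Module ℝ HW] [AddCommGroup HU] [Module ℝ HU] (V : Submodule ℝ HV) (W : Submodule ℝ HW)
    (A : HV →ₗ[ℝ] HU) (B : HW →ₗ[ℝ] HU) (u : HU) (K : ConvexCone ℝ HU) : Set HV :=
  {x | x ∈ V ∧ ∃ y ∈ W, A x + B y + u ∈ K}

section

variable {HV HW HU : Type*}
  [NormedAddCommGroup HV] [InnerProductSpace ℝ HV]
  [NormedAddCommGroup HW] [InnerProductSpace ℝ HW]
  [NormedAddCommGroup HU] [InnerProductSpace ℝ HU]

lemma orthogonalProjectionOnto_mem_conicLiftSet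
    {V V' : Submodule ℝ HV} {W W' : Submodule ℝ HW} {U : Submodule ℝ HU}
    [V.HasOrthogonalProjection] [W.HasOrthogonalProjection] [U.HasOrthogonalProjection]
    {A A' : HV →ₗ[ℝ] HU} {B B' : HW →ₗ[ℝ] HU} {u u' : HU} {K K' : ConvexCone ℝ HU}
    (hA : ∀ v ∈ V', (orthogonalProjectionOnto U (A' v) : HU) = A (orthogonalProjectionOnto V v))
    (hB : ∀ w ∈ W', (orthogonalProjectionOnto U (B' w) : HU) = B (orthogonalProjectionOnto W w))
    (hu : (orthogonalProjectionOnto U u' : HU) = u)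
    (hK : (fun x : HU => (orthogonalProjectionOnto U x : HU)) '' (K' : Set HU) ⊆ K)
    {x : HV} (hx : x ∈ conicLiftSet V' W' A' B' u' K') :
    (orthogonalProjectionOnto V x : HV) ∈ conicLiftSet V W A B u K := by
  obtain ⟨hxV, y, hyW, hxy⟩ := hx
  refine ⟨coe_mem _, orthogonalProjectionOnto W y, coe_mem _, hK ⟨_, hxy, ?_⟩⟩
  simp only [map_add, coe_add, hA x hxV, hB y hyW, hu]

lemma sub_mem_conicLiftSet
    {V V' : Submodule ℝ HV} {W W' : Submodule ℝ HW}
    {A A' : HV →ₗ[ℝ] HU} {B B' : HW →ₗ[ℝ] HU} {u u' : HU} {K K' : ConvexCone ℝ HU}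
    (hV : V ≤ V') (hW : W ≤ W') (hA : ∀ v ∈ V, A' v = A v) (hB : ∀ w ∈ W, B' w = B w)
    (hK : (K : Set HU) ⊆ K') {k : HU} (hk : k ∈ K') {z : HV} (hz : z ∈ V') {w : HW}
    (hw : w ∈ W) (hu : u' - u = k + A' z + B' w) {x : HV} (hx : x ∈ conicLiftSet V W A B u K) :
    x - z ∈ conicLiftSet V' W' A' B' u' K' := by
  obtain ⟨hxV, y, hyW, hxy⟩ := hx
  refine ⟨sub_mem (hV hxV) hz, y - w, sub_mem (hW hyW) (hW hw), ?_⟩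
  have hslack : A' (x - z) + B' (y - w) + u' = (A x + B y + u) + k := by
    rw [map_sub, map_sub, sub_eq_iff_eq_add.mp hu, hA x hxV, hB y hyW]
    abel
  rw [hslack]
  exact K'.add_mem (hK hxy) hk

lemma orthogonalProjectionOnto_sub_of_mem_orthogonal {V : Submodule ℝ HV}
    [V.HasOrthogonalProjection] {x z : HV} (hx : x ∈ V) (hz : z ∈ Vᗮ) :
    (orthogonalProjectionOnto V (x - z) : HV) = x := by
  rw [map_sub, orthogonalProjectionOnto_apply_of_mem_orthogonal hz, sub_zero,
    orthogonalProjectionOnto_mem_subspace_eq_self (⟨x, hx⟩ : V)]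

end

theorem certified_projection_compatibility_b_general
    {HV HW HU : Type*}
    [NormedAddCommGroup HV] [InnerProductSpace ℝ HV] [FiniteDimensional ℝ HV]
    [NormedAddCommGroup HW] [InnerProductSpace ℝ HW] [FiniteDimensional ℝ HW]
    [NormedAddCommGroup HU] [InnerProductSpace ℝ HU] [FiniteDimensional ℝ HU]
    (V : ℕ → Submodule ℝ HV) (hV : ∀ n, V n ≤ V (n + 1))
    (W : ℕ → Submodule ℝ HW) (hW : ∀ n, W n ≤ W (n + 1))
    (U : ℕ → Submodule ℝ HU)
    (K : ℕ → ConvexCone ℝ HU)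
    (hKint : ∀ n, (K (n + 1) : Set HU) ∩ (U n : Set HU) = (K n : Set HU))
    (hKproj : ∀ n, (fun x : HU => (Submodule.orthogonalProjectionOnto (U n) x : HU)) ''
        (K (n + 1) : Set HU) = (K n : Set HU))
    (A : ℕ → HV →ₗ[ℝ] HU) (B : ℕ → HW →ₗ[ℝ] HU)
    (hAcompat : ∀ n, ∀ v ∈ V n, A (n + 1) v = A n v)
    (hAadj : ∀ n, ∀ v ∈ V (n + 1),
      (Submodule.orthogonalProjectionOnto (U n) (A (n + 1) v) : HU)
        = A n (Submodule.orthogonalProjectionOnto (V n) v))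
    (hBcompat : ∀ n, ∀ w ∈ W n, B (n + 1) w = B n w)
    (hBadj : ∀ n, ∀ w ∈ W (n + 1),
      (Submodule.orthogonalProjectionOnto (U n) (B (n + 1) w) : HU)
        = B n (Submodule.orthogonalProjectionOnto (W n) w))
    (u : ℕ → HU)
    (hufree : ∀ n, (Submodule.orthogonalProjectionOnto (U n) (u (n + 1)) : HU) = u n)
    (hucone : ∀ n, ∃ k ∈ K (n + 1), ∃ z ∈ V (n + 1) ⊓ (V n)ᗮ, ∃ w ∈ W n,
      u (n + 1) - u n = k + A (n + 1) z + B (n + 1) w) :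
    ∀ n, (fun x : HV => (Submodule.orthogonalProjectionOnto (V n) x : HV)) ''
          {x : HV | x ∈ V (n + 1) ∧
            ∃ y ∈ W (n + 1), A (n + 1) x + B (n + 1) y + u (n + 1) ∈ K (n + 1)}
        = {x : HV | x ∈ V n ∧ ∃ y ∈ W n, A n x + B n y + u n ∈ K n} := by
  intro n
  change _ '' conicLiftSet _ _ _ _ _ _ = conicLiftSet _ _ _ _ _ _
  refine subset_antisymm ?_ fun x hx => ?_
  · rintro _ ⟨x, hx, rfl⟩
    exact orthogonalProjectionOnto_mem_conicLiftSet (hAadj n) (hBadj n) (hufree n)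
      (hKproj n).subset hx
  · obtain ⟨k, hk, z, ⟨hzV, hzperp⟩, w, hw, hu⟩ := hucone n
    have hKmono : (K n : Set HU) ⊆ K (n + 1) := (hKint n).symm.subset.trans Set.inter_subset_left
    exact ⟨x - z,
      sub_mem_conicLiftSet (hV n) (hW n) (hAcompat n) (hBcompat n) hKmono hk hzV hw hu hx,
      orthogonalProjectionOnto_sub_of_mem_orthogonal hx.1 hzperp⟩

/-- Given consistent sequences `{V n}, {W n}, {U n}`, intersection- and
projection-compatible cones `{K n}`, and
`C n = {x ∈ V n | ∃ y ∈ W n, A n x + B n y + u n ∈ K n}`, if `{A n}, {A n *}, {B n},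
{B n *}` are all morphisms of sequences, `{u n}` is freely described, and
`u (n+1) - u n ∈ K (n+1) + A (n+1) (V nᗮ) + B (n+1) (W n)` for all `n`, then `{C n}` is
projection-compatible: `𝒫_{V n} '' C (n+1) = C n`. -/
theorem certified_projection_compatibility_b
    {Γ : Type*} [Group Γ] (G : ℕ → Subgroup Γ) (hG : ∀ n, G n ≤ G (n + 1))
    {HV HW HU : Type*}
    [NormedAddCommGroup HV] [InnerProductSpace ℝ HV] [FiniteDimensional ℝ HV]
    [NormedAddCommGroup HW] [InnerProductSpace ℝ HW] [FiniteDimensional ℝ HW]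
    [NormedAddCommGroup HU] [InnerProductSpace ℝ HU] [FiniteDimensional ℝ HU]
    (ρV : Γ →* (HV ≃ₗᵢ[ℝ] HV)) (ρW : Γ →* (HW ≃ₗᵢ[ℝ] HW)) (ρU : Γ →* (HU ≃ₗᵢ[ℝ] HU))
    (V : ℕ → Submodule ℝ HV) (hV : ∀ n, V n ≤ V (n + 1))
    (W : ℕ → Submodule ℝ HW) (hW : ∀ n, W n ≤ W (n + 1))
    (U : ℕ → Submodule ℝ HU) (hU : ∀ n, U n ≤ U (n + 1))
    (hactV : ∀ n m, n ≤ m → ∀ g ∈ G n, ∀ v ∈ V m, ρV g v ∈ V m)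
    (hactW : ∀ n m, n ≤ m → ∀ g ∈ G n, ∀ w ∈ W m, ρW g w ∈ W m)
    (hactU : ∀ n m, n ≤ m → ∀ g ∈ G n, ∀ u ∈ U m, ρU g u ∈ U m)
    (K : ℕ → ConvexCone ℝ HU)
    (hKU : ∀ n, (K n : Set HU) ⊆ (U n : Set HU))
    (hKinv : ∀ n, ∀ g ∈ G n, ∀ x ∈ K n, ρU g x ∈ K n)
    (hKint : ∀ n, (K (n + 1) : Set HU) ∩ (U n : Set HU) = (K n : Set HU))
    (hKproj : ∀ n, (fun x : HU => (Submodule.orthogonalProjectionOnto (U n) x : HU)) ''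
        (K (n + 1) : Set HU) = (K n : Set HU))
    (A : ℕ → HV →ₗ[ℝ] HU) (B : ℕ → HW →ₗ[ℝ] HU)
    (hAmaps : ∀ n, ∀ v ∈ V n, A n v ∈ U n)
    (hAequiv : ∀ n, ∀ g ∈ G n, ∀ v ∈ V n, A n (ρV g v) = ρU g (A n v))
    (hAcompat : ∀ n, ∀ v ∈ V n, A (n + 1) v = A n v)
    (hAadj : ∀ n, ∀ v ∈ V (n + 1),
      (Submodule.orthogonalProjectionOnto (U n) (A (n + 1) v) : HU)
        = A n (Submodule.orthogonalProjectionOnto (V n) v))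
    (hBmaps : ∀ n, ∀ w ∈ W n, B n w ∈ U n)
    (hBequiv : ∀ n, ∀ g ∈ G n, ∀ w ∈ W n, B n (ρW g w) = ρU g (B n w))
    (hBcompat : ∀ n, ∀ w ∈ W n, B (n + 1) w = B n w)
    (hBadj : ∀ n, ∀ w ∈ W (n + 1),
      (Submodule.orthogonalProjectionOnto (U n) (B (n + 1) w) : HU)
        = B n (Submodule.orthogonalProjectionOnto (W n) w))
    (u : ℕ → HU)
    (humem : ∀ n, u n ∈ U n)
    (huinv : ∀ n, ∀ g ∈ G n, ρU g (u n) = u n)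
    (hufree : ∀ n, (Submodule.orthogonalProjectionOnto (U n) (u (n + 1)) : HU) = u n)
    (hucone : ∀ n, ∃ k ∈ K (n + 1), ∃ z ∈ V (n + 1) ⊓ (V n)ᗮ, ∃ w ∈ W n,
      u (n + 1) - u n = k + A (n + 1) z + B (n + 1) w) :
    ∀ n, (fun x : HV => (Submodule.orthogonalProjectionOnto (V n) x : HV)) ''
          {x : HV | x ∈ V (n + 1) ∧
            ∃ y ∈ W (n + 1), A (n + 1) x + B (n + 1) y + u (n + 1) ∈ K (n + 1)}
        = {x : HV | x ∈ V n ∧ ∃ y ∈ W n, A n x + B n y + u n ∈ K n} :=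
  certified_projection_compatibility_b_general V hV W hW U K hKint hKproj A B hAcompat hAadj
    hBcompat hBadj u hufree hucone
end

section
/- Let $\{V_n\}$ be a consistent sequence and $\{C_n \subseteq V_n\}$ a sequence of convex sets. If $\{C_n\}$ is projection-compatible ($\mathcal{P}_{V_n} C_{n+1} = C_n$), then the sequence of support functions $h_{C_n}(x) = \sup_{x' \in C_n} \langle x', x \rangle$ is intersection-compatible: $h_{C_{n+1}}|_{V_n} = h_{C_n}$. Conversely, if $\{C_n\}$ is intersection-compatible and each $C_n$ is compact, then $\{h_{C_n}\}$ is projection-compatible: $\inf\{h_{C_{n+1}}(x') : \mathcal{P}_{V_n}(x') = x\} = h_{C_n}(x)$ for all $x \in V_n$. -/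
/-!
Both directions rest on the self-adjointness of the orthogonal projection `P` onto `V n`: for
`x ∈ V n` one has `⟪c, x⟫ = ⟪P c, x⟫`, so projecting `C (n + 1)` does not change its support
function on `V n`, and `⟪c, x'⟫ = ⟪c, x⟫` whenever `c ∈ V n` and `P x' = x`.
The latter gives `h_{C n} x ≤ h_{C (n+1)} x'` on the fibre `P x' = x`. For the reverse
inequality, given `β > h_{C n} x`, separate the compact convex image of `C (n + 1)` under
`c ↦ (c - P c, ⟪c, x⟫)` in `H × ℝ` from the ray `{0} × [β, ∞)`; they are disjoint because
`C (n + 1) ∩ V n = C n`. The separating functional, read through the Riesz representation,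
yields `w ⊥ V n` with `⟪c, x + w⟫ < β` on all of `C (n + 1)`.
-/

noncomputable section

/-- The extended-real-valued support function of a set `C`:
`h_C (x) = sup_{x' ∈ C} ⟪x', x⟫` (with `sup ∅ = ⊥`). -/
def suppFn {H : Type*} [NormedAddCommGroup H] [InnerProductSpace ℝ H]
    (C : Set H) (x : H) : EReal :=
  sSup (Real.toEReal '' {r : ℝ | ∃ x' ∈ C, r = inner (𝕜 := ℝ) x' x})

open Set RealInnerProductSpace

theorem exists_mul_apply_fst_add_snd_lt {E : Type*} [NormedAddCommGroup E] [NormedSpace ℝ E]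
    {T : Set (E × ℝ)} (hT : BddAbove (Prod.snd '' T)) {g : StrongDual ℝ E} {u : ℝ} (hu : u < 0)
    (hg : ∀ p ∈ T, g p.1 < u) (β : ℝ) : ∃ t : ℝ, ∀ p ∈ T, t * g p.1 + p.2 < β := by
  obtain ⟨M, hM⟩ := hT
  refine ⟨max 0 ((M - β + 1) / -u), fun p hp => ?_⟩
  have h1 := mul_le_mul_of_nonneg_left (hg p hp).le (le_max_left 0 ((M - β + 1) / -u))
  have h2 := mul_le_mul_of_nonpos_right (le_max_right 0 ((M - β + 1) / -u)) hu.le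
  have h3 : (M - β + 1) / -u * u = -(M - β + 1) := by
    rw [div_neg, neg_mul, div_mul_cancel₀ _ hu.ne]
  linarith [hM (mem_image_of_mem _ hp)]

theorem exists_strongDual_apply_fst_add_snd_lt {E : Type*} [NormedAddCommGroup E]
    [NormedSpace ℝ E] {T : Set (E × ℝ)} (hT : IsCompact T) (hTc : Convex ℝ T) {β : ℝ}
    (hβ : ∀ p ∈ T, p.1 = 0 → p.2 < β) :
    ∃ g : StrongDual ℝ E, ∀ p ∈ T, g p.1 + p.2 < β := by
  have hdisj : Disjoint T ({0} ×ˢ Ici β) :=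
    disjoint_left.2 fun p hp hpS => (hβ p hp hpS.1).not_ge hpS.2
  obtain ⟨f, u, v, hfT, huv, hfS⟩ := geometric_hahn_banach_compact_closed hTc hT
    ((convex_singleton 0).prod (convex_Ici β)) (isClosed_singleton.prod isClosed_Ici) hdisj
  set g : StrongDual ℝ E := f.comp (ContinuousLinearMap.inl ℝ E ℝ)
  set τ : ℝ := f (0, 1)
  have hf : ∀ p : E × ℝ, f p = g p.1 + p.2 * τ := fun p => by
    conv_lhs => rw [show p = (p.1, 0) + p.2 • ((0 : E), (1 : ℝ)) by ext <;> simp]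
    rw [map_add, map_smul, smul_eq_mul]
    rfl
  have hfS' : ∀ s, β ≤ s → v < s * τ := fun s hs => by
    simpa [hf] using hfS (0, s) ⟨rfl, hs⟩
  have hτ : 0 ≤ τ := by
    by_contra! hτ
    have hv := hfS' (max β (v / τ)) (le_max_left _ _)
    have hle := mul_le_mul_of_nonpos_right (le_max_right β (v / τ)) hτ.le
    rw [div_mul_cancel₀ _ hτ.ne] at hle
    linarith
  rcases hτ.lt_or_eq with hτpos | hτzero
  · refine ⟨τ⁻¹ • g, fun p hp => ?_⟩
    have hlt : g p.1 < τ * (β - p.2) := by linarith [hf p ▸ hfT p hp, hfS' β le_rfl]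
    have := (inv_mul_lt_iff₀ hτpos).2 hlt
    simp only [smul_apply, smul_eq_mul]
    linarith
  · -- a vertical separating hyperplane: rescale `g` to absorb the bounded second coordinate
    have hu : u < 0 := by linarith [hfS' β le_rfl, hτzero ▸ (mul_zero β)]
    obtain ⟨t, ht⟩ := exists_mul_apply_fst_add_snd_lt (hT.image continuous_snd).bddAbove hu
      (fun p hp => by simpa [hf, ← hτzero] using hfT p hp) β
    exact ⟨t • g, ht⟩

section SupportFunction

variable {H : Type*} [NormedAddCommGroup H] [InnerProductSpace ℝ H]

theorem suppFn_eq_biSup (C : Set H) (x : H) :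
    suppFn C x = ⨆ c ∈ C, ((⟪c, x⟫ : ℝ) : EReal) := by
  have : {r : ℝ | ∃ c ∈ C, r = ⟪c, x⟫} = (fun c => ⟪c, x⟫) '' C := by
    ext r
    simp [eq_comm]
  rw [suppFn, this, image_image, sSup_image]

theorem coe_inner_le_suppFn {C : Set H} {c : H} (hc : c ∈ C) (x : H) :
    ((⟪c, x⟫ : ℝ) : EReal) ≤ suppFn C x :=
  (suppFn_eq_biSup C x).symm ▸ le_iSup₂ (f := fun c _ => ((⟪c, x⟫ : ℝ) : EReal)) c hc

theorem suppFn_le_coe {C : Set H} {x : H} {b : ℝ} (h : ∀ c ∈ C, ⟪c, x⟫ ≤ b) :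
    suppFn C x ≤ b :=
  (suppFn_eq_biSup C x).symm ▸ iSup₂_le fun c hc => EReal.coe_le_coe_iff.2 (h c hc)

theorem suppFn_image_starProjection (U : Submodule ℝ H) [U.HasOrthogonalProjection] (C : Set H)
    {x : H} (hx : x ∈ U) : suppFn (U.starProjection '' C) x = suppFn C x := by
  simp only [suppFn_eq_biSup, iSup_image, U.inner_starProjection_left_eq_right,
    U.starProjection_eq_self_iff.2 hx]

theorem suppFn_inter_le_of_starProjection_eq (U : Submodule ℝ H) [U.HasOrthogonalProjection]
    (C : Set H) {x x' : H} (hx' : U.starProjection x' = x) : suppFn (C ∩ U) x ≤ suppFn C x' := by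
  rw [suppFn_eq_biSup]
  refine iSup₂_le fun c hc => ?_
  rw [← hx', ← U.inner_starProjection_left_eq_right, U.starProjection_eq_self_iff.2 hc.2]
  exact coe_inner_le_suppFn hc.1 x'

theorem exists_starProjection_eq_forall_inner_lt [CompleteSpace H] (U : Submodule ℝ H)
    [U.HasOrthogonalProjection] {K : Set H} (hK : IsCompact K) (hKc : Convex ℝ K) {x : H}
    (hx : x ∈ U) {β : ℝ} (hβ : ∀ c ∈ K ∩ U, ⟪c, x⟫ < β) :
    ∃ x', U.starProjection x' = x ∧ ∀ c ∈ K, ⟪c, x'⟫ < β := by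
  set L : H →L[ℝ] H × ℝ := Uᗮ.starProjection.prod (innerSL ℝ x)
  obtain ⟨g, hg⟩ := exists_strongDual_apply_fst_add_snd_lt (hK.image L.continuous)
    (hKc.linear_image L.toLinearMap) (β := β) <| by
      rintro _ ⟨c, hc, rfl⟩ hc0
      have hcU : c ∈ U := by
        rw [← U.orthogonal_orthogonal, ← Submodule.starProjection_apply_eq_zero_iff]
        exact hc0
      simpa [L, real_inner_comm] using hβ c ⟨hc, hcU⟩
  set y := Uᗮ.starProjection ((InnerProductSpace.toDual ℝ H).symm g)
  refine ⟨x + y, ?_, fun c hc => ?_⟩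
  · rw [map_add, U.starProjection_eq_self_iff.2 hx,
      U.starProjection_apply_eq_zero_iff.2 (Uᗮ.starProjection_apply_mem _), add_zero]
  · have := hg (L c) (mem_image_of_mem _ hc)
    simp only [L, ContinuousLinearMap.prod_apply, innerSL_apply_apply] at this
    rw [inner_add_right, ← Uᗮ.inner_starProjection_left_eq_right,
      real_inner_comm _ (Uᗮ.starProjection c),
      InnerProductSpace.toDual_symm_apply, real_inner_comm]
    linarith

theorem sInf_suppFn_starProjection_fiber [CompleteSpace H] (U : Submodule ℝ H)
    [U.HasOrthogonalProjection] {K : Set H} (hK : IsCompact K) (hKc : Convex ℝ K) {x : H}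
    (hx : x ∈ U) : sInf (suppFn K '' {x' | U.starProjection x' = x}) = suppFn (K ∩ U) x := by
  apply le_antisymm
  · refine EReal.le_of_forall_lt_iff_le.1 fun β hβ => ?_
    have hlt : ∀ c ∈ K ∩ U, ⟪c, x⟫ < β := fun c hc =>
      EReal.coe_lt_coe_iff.1 <| (coe_inner_le_suppFn hc x).trans_lt hβ
    obtain ⟨x', hx', hx'β⟩ := exists_starProjection_eq_forall_inner_lt U hK hKc hx hlt
    exact sInf_le_of_le ⟨x', hx', rfl⟩ (suppFn_le_coe fun c hc => (hx'β c hc).le)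
  · refine le_sInf ?_
    rintro _ ⟨x', hx', rfl⟩
    exact suppFn_inter_le_of_starProjection_eq U K hx'

end SupportFunction

theorem support_function_compatibility_general
    {H : Type*} [NormedAddCommGroup H] [InnerProductSpace ℝ H] [FiniteDimensional ℝ H]
    (V : ℕ → Submodule ℝ H)
    (C : ℕ → Set H)
    (hconv : ∀ n, Convex ℝ (C n)) :
    ((∀ n, (fun x : H => (Submodule.orthogonalProjectionOnto (V n) x : H)) '' C (n + 1) = C n) →
      ∀ n, ∀ x ∈ V n, suppFn (C (n + 1)) x = suppFn (C n) x) ∧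
    ((∀ n, C (n + 1) ∩ (V n : Set H) = C n) → (∀ n, IsCompact (C n)) →
      ∀ n, ∀ x ∈ V n,
        sInf (suppFn (C (n + 1)) '' {x' : H | (Submodule.orthogonalProjectionOnto (V n) x' : H) = x})
          = suppFn (C n) x) := by
  refine ⟨fun hP n x hx => ?_, fun hI hK n x hx => ?_⟩
  · rw [← hP n]
    exact (suppFn_image_starProjection (V n) _ hx).symm
  · rw [← hI n]
    exact sInf_suppFn_starProjection_fiber (V n) (hK (n + 1)) (hconv (n + 1)) hx

/-- If the sequence of convex sets `{C n ⊆ V n}` is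
projection-compatible, then the support functions are intersection-compatible
(`h_{C (n+1)}` restricted to `V n` equals `h_{C n}`). Conversely, if `{C n}` is
intersection-compatible and each `C n` is compact, then the support functions are
projection-compatible: `inf { h_{C (n+1)} (x') | 𝒫_{V n} x' = x } = h_{C n} (x)`
for all `x ∈ V n`. -/
theorem support_function_compatibility
    {H : Type*} [NormedAddCommGroup H] [InnerProductSpace ℝ H] [FiniteDimensional ℝ H]
    (V : ℕ → Submodule ℝ H) (hV : ∀ n, V n ≤ V (n + 1))
    (C : ℕ → Set H) (hCV : ∀ n, C n ⊆ (V n : Set H))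
    (hconv : ∀ n, Convex ℝ (C n)) :
    ((∀ n, (fun x : H => (Submodule.orthogonalProjectionOnto (V n) x : H)) '' C (n + 1) = C n) →
      ∀ n, ∀ x ∈ V n, suppFn (C (n + 1)) x = suppFn (C n) x) ∧
    ((∀ n, C (n + 1) ∩ (V n : Set H) = C n) → (∀ n, IsCompact (C n)) →
      ∀ n, ∀ x ∈ V n,
        sInf (suppFn (C (n + 1)) '' {x' : H | (Submodule.orthogonalProjectionOnto (V n) x' : H) = x})
          = suppFn (C n) x) :=
  support_function_compatibility_general V C hconv
end
end

section
/- Let $\{G_n\}$ be a family of compact groups and $\mathscr{V}_0$ a consistent sequence with stabilizing subgroups $H_{n,d} = \{g \in G_n : g \cdot v = v \text{ for all } v \in (V_0)_d\}$. Let $\mathscr{V} = \{V_n\}$ and $\mathscr{U} = \{U_n\}$ be $\mathscr{V}_0$-modules (i.e., $U_d \subseteq U_n^{H_{n,d}}$ for all $d \leq n$, and similarly for $\mathscr{V}$). Suppose $\mathscr{V}$ is generated in degree $d$, fix $n_0 \geq d$, and let $A_{n_0} : V_{n_0} \to U_{n_0}$ be a $G_{n_0}$-equivariant linear map. Then there exists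 a family $\{A_n : V_n \to U_n\}_{n \leq n_0}$ of $G_n$-equivariant maps with $A_{n+1}|_{V_n} = A_n$ for all $n < n_0$ if and only if $A_{n_0}(V_j) \subseteq U_j$ for all $j \leq d$. -/
/-- Let `{V n}` and `{U n}` be `𝒱₀`-modules (each `V d`, resp. `U d`,
is pointwise fixed by the stabilizing subgroups `H (n, d)` of the base consistent
sequence `𝒱₀`, for `d ≤ n`), with `{V n}` generated in degree `d`. Fix `n₀ ≥ d` and a
`G n₀`-equivariant linear map `A : V n₀ → U n₀` (modelled as an ambient map). Then `A`
extends to a compatible family of `G n`-equivariant maps `{A n : V n → U n}` for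
`n ≤ n₀` if and only if `A (V j) ⊆ U j` for all `j ≤ d`. -/
theorem extend_downwards_iff
    {Γ : Type*} [Group Γ] (G : ℕ → Subgroup Γ) (hG : ∀ n, G n ≤ G (n + 1))
    {H0 HV HU : Type*}
    [NormedAddCommGroup H0] [InnerProductSpace ℝ H0]
    [NormedAddCommGroup HV] [InnerProductSpace ℝ HV]
    [NormedAddCommGroup HU] [InnerProductSpace ℝ HU]
    (ρ0 : Γ →* (H0 ≃ₗᵢ[ℝ] H0)) (ρV : Γ →* (HV ≃ₗᵢ[ℝ] HV)) (ρU : Γ →* (HU ≃ₗᵢ[ℝ] HU))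
    (V0 : ℕ → Submodule ℝ H0) (hV0 : ∀ n, V0 n ≤ V0 (n + 1))
    (hact0 : ∀ n m, n ≤ m → ∀ g ∈ G n, ∀ v ∈ V0 m, ρ0 g v ∈ V0 m)
    (V : ℕ → Submodule ℝ HV) (hV : ∀ n, V n ≤ V (n + 1))
    (hactV : ∀ n m, n ≤ m → ∀ g ∈ G n, ∀ v ∈ V m, ρV g v ∈ V m)
    (U : ℕ → Submodule ℝ HU) (hU : ∀ n, U n ≤ U (n + 1))
    (hactU : ∀ n m, n ≤ m → ∀ g ∈ G n, ∀ u ∈ U m, ρU g u ∈ U m)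
    -- `{V n}` and `{U n}` are `𝒱₀`-modules: elements of the stabilizing subgroups
    -- `H (n, e) = {g ∈ G n | g fixes V0 e pointwise}` fix `V e` resp. `U e` pointwise.
    (hVmod : ∀ e n, e ≤ n → ∀ g ∈ G n, (∀ v0 ∈ V0 e, ρ0 g v0 = v0) →
      ∀ v ∈ V e, ρV g v = v)
    (hUmod : ∀ e n, e ≤ n → ∀ g ∈ G n, (∀ v0 ∈ V0 e, ρ0 g v0 = v0) →
      ∀ u ∈ U e, ρU g u = u)
    (d : ℕ)
    (hgen : ∀ n, d ≤ n →
      V n = Submodule.span ℝ {x : HV | ∃ g ∈ G n, ∃ v ∈ V d, x = ρV g v})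
    (n₀ : ℕ) (hn₀ : d ≤ n₀)
    (A : HV →ₗ[ℝ] HU)
    (hAmaps : ∀ v ∈ V n₀, A v ∈ U n₀)
    (hAequiv : ∀ g ∈ G n₀, ∀ v ∈ V n₀, A (ρV g v) = ρU g (A v)) :
    (∃ B : ℕ → HV →ₗ[ℝ] HU,
      (∀ n, n ≤ n₀ → ∀ v ∈ V n, B n v ∈ U n) ∧
      (∀ n, n ≤ n₀ → ∀ g ∈ G n, ∀ v ∈ V n, B n (ρV g v) = ρU g (B n v)) ∧
      (∀ n, n < n₀ → ∀ v ∈ V n, B (n + 1) v = B n v) ∧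
      (∀ v ∈ V n₀, B n₀ v = A v)) ↔
    (∀ j, j ≤ d → ∀ v ∈ V j, A v ∈ U j) := by
  have hGmono : ∀ {m n : ℕ}, m ≤ n → G m ≤ G n := fun {m n} h =>
    monotone_nat_of_le_succ hG h
  have hVmono : ∀ {m n : ℕ}, m ≤ n → V m ≤ V n := fun {m n} h =>
    monotone_nat_of_le_succ hV h
  have hUmono : ∀ {m n : ℕ}, m ≤ n → U m ≤ U n := fun {m n} h =>
    monotone_nat_of_le_succ hU h
  constructor
  · rintro ⟨B, hB1, hB2, hB3, hB4⟩ j hj v hv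
    have hvn : v ∈ V n₀ := hVmono (hj.trans hn₀) hv
    have key : ∀ n, j ≤ n → n ≤ n₀ → B n v = B j v := by
      intro n hn
      induction n, hn using Nat.le_induction with
      | base => intro _; rfl
      | succ n hjn ih =>
        intro hn1
        rw [hB3 n (by omega) v (hVmono hjn hv), ih (by omega)]
    have hAv : A v = B j v := by
      rw [← hB4 v hvn, key n₀ (hj.trans hn₀) le_rfl]
    rw [hAv]
    exact hB1 j (hj.trans hn₀) v hv
  · intro hA
    refine ⟨fun _ => A, ?_, ?_, fun n _ v _ => rfl, fun v _ => rfl⟩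
    · intro n hn v hv
      rcases le_or_gt n d with h | h
      · exact hA n h v hv
      · have hd : d ≤ n := h.le
        have hsub : V n ≤ (U n).comap A := by
          rw [hgen n hd]
          apply Submodule.span_le.mpr
          rintro x ⟨g, hg, w, hw, rfl⟩
          have hAw : A w ∈ U d := hA d le_rfl w hw
          have heq : A (ρV g w) = ρU g (A w) :=
            hAequiv g (hGmono hn hg) w (hVmono hn₀ hw)
          simp only [Submodule.mem_comap, SetLike.mem_coe, heq]
          exact hactU n n le_rfl g hg (A w) (hUmono hd hAw)
        exact hsub hv
    · intro n hn g hg v hv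
      exact hAequiv g (hGmono hn hg) v (hVmono hn hv)
end

section
/- Let $\mathscr{V} = \{V_n\}$, $\mathscr{U} = \{U_n\}$ be consistent sequences of $\{G_n\}$-representations with $\mathscr{V}$ generated in degree $d$, and fix $n_0 \geq d$ and a $G_{n_0}$-equivariant map $A_{n_0} : V_{n_0} \to U_{n_0}$. There exists a family of $G_n$-equivariant maps $\{A_n : V_n \to U_n\}_{n \geq n_0}$ with $A_{n+1}|_{V_n} = A_n$ for all $n \geq n_0$ if and only if the following holds: for all $n \in \mathbb{N}$, all finite families $g_i \in G_n$ and $x_i \in V_d$, the relation $\sum_i g_i x_i = 0$ implies $\sum_i g_i (A_{n_0} x_i) = 0$. Moreover, when such an extension exists it is unique. -/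
/-!
An equivariant extension is forced on the generators `g • x` (`g ∈ G n`, `x ∈ V d`) to send
them to `g • A x`, and these span `V n`; this gives uniqueness and shows that relations must be
preserved. Conversely, preserved relations say exactly that the span of the pairs
`(g • x, g • A x)` meets `0 × HU` only in `0`, i.e. is the graph of a linear map on `V n`, which
extends to all of `HV`; equivariance, compatibility and agreement with `A` are then checked on
generators.
-/

/-- The property that `B` is a compatible family of `G n`-equivariant maps
`V n → U n` for `n ≥ n₀` extending the map `A` given in degree `n₀`. -/
def IsUpwardExtension
    {Γ : Type*} [Group Γ] (G : ℕ → Subgroup Γ)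
    {HV HU : Type*}
    [NormedAddCommGroup HV] [InnerProductSpace ℝ HV]
    [NormedAddCommGroup HU] [InnerProductSpace ℝ HU]
    (ρV : Γ →* (HV ≃ₗᵢ[ℝ] HV)) (ρU : Γ →* (HU ≃ₗᵢ[ℝ] HU))
    (V : ℕ → Submodule ℝ HV) (U : ℕ → Submodule ℝ HU)
    (A : HV →ₗ[ℝ] HU) (n₀ : ℕ) (B : ℕ → HV →ₗ[ℝ] HU) : Prop :=
  (∀ n, n₀ ≤ n → ∀ v ∈ V n, B n v ∈ U n) ∧
  (∀ n, n₀ ≤ n → ∀ g ∈ G n, ∀ v ∈ V n, B n (ρV g v) = ρU g (B n v)) ∧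
  (∀ n, n₀ ≤ n → ∀ v ∈ V n, B (n + 1) v = B n v) ∧
  (∀ v ∈ V n₀, B n₀ v = A v)

theorem Submodule.exists_le_graph_of_fst_eq_zero {K M N : Type*} [DivisionRing K]
    [AddCommGroup M] [Module K M] [AddCommGroup N] [Module K N]
    (W : Submodule K (M × N)) (hW : ∀ p ∈ W, p.1 = 0 → p.2 = 0) :
    ∃ f : M →ₗ[K] N, W ≤ f.graph := by
  obtain ⟨f, hf⟩ := W.toLinearPMap.toFun.exists_extend
  refine ⟨f, fun p hp => ?_⟩
  rw [← W.toLinearPMap_graph_eq fun p hp => hW p hp, LinearPMap.mem_graph_iff] at hp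
  obtain ⟨y, hy₁, hy₂⟩ := hp
  rw [LinearMap.mem_graph_iff, ← hy₁, ← hy₂]
  exact (LinearMap.congr_fun hf y).symm

section Generators

variable {Γ : Type*} [Group Γ] (G : ℕ → Subgroup Γ) {HV HU : Type*}
  [NormedAddCommGroup HV] [NormedSpace ℝ HV] [NormedAddCommGroup HU] [NormedSpace ℝ HU]
  (ρV : Γ →* (HV ≃ₗᵢ[ℝ] HV)) (ρU : Γ →* (HU ≃ₗᵢ[ℝ] HU))
  (V : ℕ → Submodule ℝ HV) (d : ℕ) (A : HV →ₗ[ℝ] HU)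

def IsGeneratedInDegree : Prop :=
  ∀ n, d ≤ n → V n = Submodule.span ℝ {x : HV | ∃ g ∈ G n, ∃ v ∈ V d, x = ρV g v}

def PreservesRelations (n : ℕ) : Prop :=
  ∀ (m : ℕ) (g : Fin m → Γ) (x : Fin m → HV), (∀ i, g i ∈ G n) → (∀ i, x i ∈ V d) →
    (∑ i, ρV (g i) (x i)) = 0 → (∑ i, ρU (g i) (A (x i))) = 0

def ExtendsOnGenerators (n : ℕ) (f : HV →ₗ[ℝ] HU) : Prop :=
  ∀ g ∈ G n, ∀ v ∈ V d, f (ρV g v) = ρU g (A v)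

variable {G ρV ρU V d A}

theorem ExtendsOnGenerators.mono (hG : Monotone G) {n m : ℕ} (hnm : n ≤ m)
    {f : HV →ₗ[ℝ] HU} (hf : ExtendsOnGenerators G ρV ρU V d A m f) :
    ExtendsOnGenerators G ρV ρU V d A n f :=
  fun g hg => hf g (hG hnm hg)

theorem ExtendsOnGenerators.preservesRelations {n : ℕ} {f : HV →ₗ[ℝ] HU}
    (hf : ExtendsOnGenerators G ρV ρU V d A n f) : PreservesRelations G ρV ρU V d A n := by
  intro m g x hg hx hsum
  calc ∑ i, ρU (g i) (A (x i)) = ∑ i, f (ρV (g i) (x i)) :=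
        Finset.sum_congr rfl fun i _ => (hf _ (hg i) _ (hx i)).symm
    _ = 0 := by rw [← map_sum, hsum, map_zero]

theorem PreservesRelations.exists_extendsOnGenerators {n : ℕ}
    (h : PreservesRelations G ρV ρU V d A n) :
    ∃ f : HV →ₗ[ℝ] HU, ExtendsOnGenerators G ρV ρU V d A n f := by
  set S := {p : HV × HU | ∃ g ∈ G n, ∃ v ∈ V d, p = (ρV g v, ρU g (A v))}
  have hS : ∀ p ∈ Submodule.span ℝ S, p.1 = 0 → p.2 = 0 := by
    intro p hp hp₁
    obtain ⟨m, c, q, rfl⟩ := Submodule.mem_span_set'.mp hp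
    choose g hg x hx hq using fun i => (q i).2
    -- the scalars `c i` are absorbed into the generators `c i • x i ∈ V d`
    have hcq : ∀ i, c i • (q i : HV × HU) =
        (ρV (g i) (c i • x i), ρU (g i) (A (c i • x i))) := by
      intro i
      rw [hq i, Prod.smul_mk, map_smul, map_smul, map_smul]
    simp only [hcq, Prod.fst_sum, Prod.snd_sum] at hp₁ ⊢
    exact h m g _ hg (fun i => (V d).smul_mem _ (hx i)) hp₁
  obtain ⟨f, hf⟩ := (Submodule.span ℝ S).exists_le_graph_of_fst_eq_zero hS
  exact ⟨f, fun g hg v hv =>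
    ((LinearMap.mem_graph_iff _ _).mp (hf (Submodule.subset_span ⟨g, hg, v, hv, rfl⟩))).symm⟩

namespace IsGeneratedInDegree

variable (hgen : IsGeneratedInDegree G ρV V d)
include hgen

theorem base_le {n : ℕ} (hdn : d ≤ n) : V d ≤ V n := by
  intro v hv
  rw [hgen n hdn]
  exact Submodule.subset_span ⟨1, one_mem _, v, hv, by simp⟩

theorem eqOn {n : ℕ} (hdn : d ≤ n) {f f' : HV →ₗ[ℝ] HU}
    (hf : ExtendsOnGenerators G ρV ρU V d A n f) (hf' : ExtendsOnGenerators G ρV ρU V d A n f') :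
    Set.EqOn f f' (V n) := by
  rw [hgen n hdn]
  refine LinearMap.eqOn_span' ?_
  rintro _ ⟨g, hg, v, hv, rfl⟩
  rw [hf g hg v hv, hf' g hg v hv]

theorem mapsTo {U : Submodule ℝ HU} {n : ℕ} (hdn : d ≤ n)
    (hactU : ∀ g ∈ G n, ∀ u ∈ U, ρU g u ∈ U) (hA : ∀ v ∈ V d, A v ∈ U)
    {f : HV →ₗ[ℝ] HU} (hf : ExtendsOnGenerators G ρV ρU V d A n f) : Set.MapsTo f (V n) U := by
  rw [hgen n hdn]
  refine fun v hv => (Submodule.span_le (p := U.comap f)).mpr ?_ hv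
  rintro _ ⟨g, hg, v, hv, rfl⟩
  rw [SetLike.mem_coe, Submodule.mem_comap, hf g hg v hv]
  exact hactU g hg _ (hA v hv)

theorem map_equivariant {n : ℕ} (hdn : d ≤ n) {f : HV →ₗ[ℝ] HU}
    (hf : ExtendsOnGenerators G ρV ρU V d A n f) {g : Γ} (hg : g ∈ G n) :
    ∀ v ∈ V n, f (ρV g v) = ρU g (f v) := by
  suffices Set.EqOn (f ∘ₗ (ρV g).toLinearMap) ((ρU g).toLinearMap ∘ₗ f) (V n) from
    fun v hv => this hv
  rw [hgen n hdn]
  refine LinearMap.eqOn_span' ?_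
  rintro _ ⟨h, hh, v, hv, rfl⟩
  have hV : ρV g (ρV h v) = ρV (g * h) v := by rw [map_mul]; rfl
  have hU : ρU g (ρU h (A v)) = ρU (g * h) (A v) := by rw [map_mul]; rfl
  change f (ρV g (ρV h v)) = ρU g (f (ρV h v))
  rw [hV, hf _ (mul_mem hg hh) v hv, hf h hh v hv, hU]

end IsGeneratedInDegree

end Generators

section Extensions

variable {Γ : Type*} [Group Γ] {G : ℕ → Subgroup Γ} {HV HU : Type*}
  [NormedAddCommGroup HV] [InnerProductSpace ℝ HV] [NormedAddCommGroup HU] [InnerProductSpace ℝ HU]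
  {ρV : Γ →* (HV ≃ₗᵢ[ℝ] HV)} {ρU : Γ →* (HU ≃ₗᵢ[ℝ] HU)}
  {V : ℕ → Submodule ℝ HV} {U : ℕ → Submodule ℝ HU} {d n₀ : ℕ} {A : HV →ₗ[ℝ] HU}

namespace IsUpwardExtension

variable {B : ℕ → HV →ₗ[ℝ] HU} (hgen : IsGeneratedInDegree G ρV V d) (hn₀ : d ≤ n₀)
  (hB : IsUpwardExtension G ρV ρU V U A n₀ B)
include hgen hn₀ hB

theorem apply_eq_of_mem_base {n : ℕ} (hn : n₀ ≤ n) : ∀ v ∈ V d, B n v = A v := by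
  induction n, hn using Nat.le_induction with
  | base => exact fun v hv => hB.2.2.2 v (hgen.base_le hn₀ hv)
  | succ n hn ih =>
    intro v hv
    rw [hB.2.2.1 n hn v (hgen.base_le (hn₀.trans hn) hv), ih v hv]

theorem extendsOnGenerators {n : ℕ} (hn : n₀ ≤ n) :
    ExtendsOnGenerators G ρV ρU V d A n (B n) := by
  intro g hg v hv
  rw [hB.2.1 n hn g hg v (hgen.base_le (hn₀.trans hn) hv),
    hB.apply_eq_of_mem_base hgen hn₀ hn v hv]

theorem eqOn {B' : ℕ → HV →ₗ[ℝ] HU} (hB' : IsUpwardExtension G ρV ρU V U A n₀ B')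
    {n : ℕ} (hn : n₀ ≤ n) : Set.EqOn (B n) (B' n) (V n) :=
  hgen.eqOn (hn₀.trans hn) (hB.extendsOnGenerators hgen hn₀ hn)
    (hB'.extendsOnGenerators hgen hn₀ hn)

end IsUpwardExtension

theorem exists_isUpwardExtension (hG : Monotone G) (hU : Monotone U)
    (hactU : ∀ n, ∀ g ∈ G n, ∀ u ∈ U n, ρU g u ∈ U n)
    (hgen : IsGeneratedInDegree G ρV V d) (hn₀ : d ≤ n₀)
    (hAmaps : ∀ v ∈ V n₀, A v ∈ U n₀)
    (hAequiv : ∀ g ∈ G n₀, ∀ v ∈ V n₀, A (ρV g v) = ρU g (A v))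
    (hrel : ∀ n, PreservesRelations G ρV ρU V d A n) :
    ∃ B, IsUpwardExtension G ρV ρU V U A n₀ B := by
  choose B hB using fun n => (hrel n).exists_extendsOnGenerators
  have hA : ExtendsOnGenerators G ρV ρU V d A n₀ A :=
    fun g hg v hv => hAequiv g hg v (hgen.base_le hn₀ hv)
  refine ⟨B, fun n hn => ?_, fun n hn g hg => ?_, fun n hn => ?_, fun v hv => ?_⟩
  · exact fun v hv => hgen.mapsTo (hn₀.trans hn) (hactU n)
      (fun v hv => hU hn (hAmaps v (hgen.base_le hn₀ hv))) (hB n) hv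
  · exact hgen.map_equivariant (hn₀.trans hn) (hB n) hg
  · exact fun v hv => hgen.eqOn (hn₀.trans hn) ((hB (n + 1)).mono hG n.le_succ) (hB n) hv
  · exact hgen.eqOn hn₀ (hB n₀) hA hv

end Extensions

theorem extend_upwards_iff_relations_general
    {Γ : Type*} [Group Γ] (G : ℕ → Subgroup Γ) (hG : ∀ n, G n ≤ G (n + 1))
    {HV HU : Type*}
    [NormedAddCommGroup HV] [InnerProductSpace ℝ HV]
    [NormedAddCommGroup HU] [InnerProductSpace ℝ HU]
    (ρV : Γ →* (HV ≃ₗᵢ[ℝ] HV)) (ρU : Γ →* (HU ≃ₗᵢ[ℝ] HU))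
    (V : ℕ → Submodule ℝ HV)
    (U : ℕ → Submodule ℝ HU) (hU : ∀ n, U n ≤ U (n + 1))
    (hactU : ∀ n m, n ≤ m → ∀ g ∈ G n, ∀ u ∈ U m, ρU g u ∈ U m)
    (d : ℕ)
    (hgen : ∀ n, d ≤ n →
      V n = Submodule.span ℝ {x : HV | ∃ g ∈ G n, ∃ v ∈ V d, x = ρV g v})
    (n₀ : ℕ) (hn₀ : d ≤ n₀)
    (A : HV →ₗ[ℝ] HU)
    (hAmaps : ∀ v ∈ V n₀, A v ∈ U n₀)
    (hAequiv : ∀ g ∈ G n₀, ∀ v ∈ V n₀, A (ρV g v) = ρU g (A v)) :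
    ((∃ B : ℕ → HV →ₗ[ℝ] HU, IsUpwardExtension G ρV ρU V U A n₀ B) ↔
      (∀ (n m : ℕ) (g : Fin m → Γ) (x : Fin m → HV),
        (∀ i, g i ∈ G n) → (∀ i, x i ∈ V d) →
        (∑ i, ρV (g i) (x i)) = 0 → (∑ i, ρU (g i) (A (x i))) = 0)) ∧
    (∀ B B' : ℕ → HV →ₗ[ℝ] HU,
      IsUpwardExtension G ρV ρU V U A n₀ B → IsUpwardExtension G ρV ρU V U A n₀ B' →
      ∀ n, n₀ ≤ n → ∀ v ∈ V n, B n v = B' n v) := by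
  have hgen : IsGeneratedInDegree G ρV V d := hgen
  have hGmono : Monotone G := monotone_nat_of_le_succ hG
  refine ⟨⟨?_, exists_isUpwardExtension hGmono (monotone_nat_of_le_succ hU)
    (fun n => hactU n n le_rfl) hgen hn₀ hAmaps hAequiv⟩, ?_⟩
  · rintro ⟨B, hB⟩ n
    exact ((hB.extendsOnGenerators hgen hn₀ (le_max_right n n₀)).mono hGmono
      (le_max_left n n₀)).preservesRelations
  · exact fun B B' hB hB' n hn v hv => hB.eqOn hgen hn₀ hB' hn hv

/-- With `{V n}` generated in degree `d` and `n₀ ≥ d`, a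
`G n₀`-equivariant map `A : V n₀ → U n₀` extends to a compatible family of equivariant
maps `{A n : V n → U n}` for `n ≥ n₀` if and only if every relation among the
generators is preserved: whenever `∑ i, g i • x i = 0` with `g i ∈ G n`, `x i ∈ V d`,
also `∑ i, g i • (A (x i)) = 0`. Moreover the extension, when it exists, is unique. -/
theorem extend_upwards_iff_relations
    {Γ : Type*} [Group Γ] (G : ℕ → Subgroup Γ) (hG : ∀ n, G n ≤ G (n + 1))
    {HV HU : Type*}
    [NormedAddCommGroup HV] [InnerProductSpace ℝ HV]
    [NormedAddCommGroup HU] [InnerProductSpace ℝ HU]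
    (ρV : Γ →* (HV ≃ₗᵢ[ℝ] HV)) (ρU : Γ →* (HU ≃ₗᵢ[ℝ] HU))
    (V : ℕ → Submodule ℝ HV) (hV : ∀ n, V n ≤ V (n + 1))
    (hactV : ∀ n m, n ≤ m → ∀ g ∈ G n, ∀ v ∈ V m, ρV g v ∈ V m)
    (U : ℕ → Submodule ℝ HU) (hU : ∀ n, U n ≤ U (n + 1))
    (hactU : ∀ n m, n ≤ m → ∀ g ∈ G n, ∀ u ∈ U m, ρU g u ∈ U m)
    (d : ℕ)
    (hgen : ∀ n, d ≤ n →
      V n = Submodule.span ℝ {x : HV | ∃ g ∈ G n, ∃ v ∈ V d, x = ρV g v})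
    (n₀ : ℕ) (hn₀ : d ≤ n₀)
    (A : HV →ₗ[ℝ] HU)
    (hAmaps : ∀ v ∈ V n₀, A v ∈ U n₀)
    (hAequiv : ∀ g ∈ G n₀, ∀ v ∈ V n₀, A (ρV g v) = ρU g (A v)) :
    ((∃ B : ℕ → HV →ₗ[ℝ] HU, IsUpwardExtension G ρV ρU V U A n₀ B) ↔
      (∀ (n m : ℕ) (g : Fin m → Γ) (x : Fin m → HV),
        (∀ i, g i ∈ G n) → (∀ i, x i ∈ V d) →
        (∑ i, ρV (g i) (x i)) = 0 → (∑ i, ρU (g i) (A (x i))) = 0)) ∧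
    (∀ B B' : ℕ → HV →ₗ[ℝ] HU,
      IsUpwardExtension G ρV ρU V U A n₀ B → IsUpwardExtension G ρV ρU V U A n₀ B' →
      ∀ n, n₀ ≤ n → ∀ v ∈ V n, B n v = B' n v) :=
  extend_upwards_iff_relations_general G hG ρV ρU V U hU hactU d hgen n₀ hn₀ A hAmaps hAequiv
end

section
/- Consider the consistent sequence $V_n = \mathbb{R}^{2^n}$ with embeddings $\varphi_n(x) = x \otimes \mathbb{1}_2$ (i.e., each coordinate is repeated twice), normalized inner product $\langle x,y \rangle = 2^{-n} x^\top y$, and the action of the cyclic groups $G_n = \mathsf{C}_{2^n}$ (cyclic shifts), with $G_n$ embedded in $G_{n+1}$ by sending a shift matrix $g$ to $g \otimes I_2$. Then this consistent sequence is not finitely generated: for every $n$, the vector $\mathbb{1}_{2^n} \otimes [1,-1]^\top \in V_{n+1}$ is orthogonal to $\mathrm{span}\{g \cdot \varphi_n(v) : g \in G_{n+1}, v \in V_n\}$, so $\mathrm{span}\{G_{n+1} \cdot \varphi_n(V_n)\} \neq V_{n+1}$. -/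
/-!
Signs alternate along coordinates, so the alternating vector `a = (1, -1, 1, -1, …)` of even
length `m` satisfies `a (i + c) = (-1)^c a i` in `Fin m`: cyclic shifts only rescale `a`, hence
`a⊥` is invariant under the cyclic group. A vector `x ⊗ 𝟙₂` is constant on the pairs
`{2j, 2j+1}`, on which `a` sums to zero, so `a ⊥ φₙ(Vₙ)`. Thus the span of the shifts of
`φₙ(Vₙ)` lies in `a⊥`, which misses `a` itself since `a ⬝ᵥ a = m ≠ 0`.
-/

def padTo (d n : ℕ) (hdn : d ≤ n) (x : Fin (2 ^ d) → ℝ) : Fin (2 ^ n) → ℝ :=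
  fun i => x ⟨i.val / 2 ^ (n - d), by
    have h1 : (2 : ℕ) ^ n = 2 ^ (n - d) * 2 ^ d := by
      rw [← pow_add, Nat.sub_add_cancel hdn]
    have h2 : (i : ℕ) < 2 ^ (n - d) * 2 ^ d := h1 ▸ i.isLt
    exact Nat.div_lt_of_lt_mul h2⟩

def cycShift (m : ℕ) (hm : 0 < m) (k : ℕ) (v : Fin m → ℝ) : Fin m → ℝ :=
  fun i => v ⟨(i.val + k) % m, Nat.mod_lt _ hm⟩

open Finset Matrix

section AlternatingSum

variable {R : Type*} [CommRing R]

theorem sum_range_neg_one_pow_mul_div_two (M : ℕ) (X : ℕ → R) :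
    ∑ j ∈ range (2 * M), (-1) ^ j * X (j / 2) = 0 := by
  induction M with
  | zero => simp
  | succ M ih =>
    rw [show 2 * (M + 1) = 2 * M + 1 + 1 by ring, sum_range_succ, sum_range_succ, ih,
      show (2 * M + 1) / 2 = M by omega, show 2 * M / 2 = M by omega, pow_succ]
    ring

theorem neg_one_pow_val_add_of_two_dvd {m : ℕ} [NeZero m] (hm : 2 ∣ m) (a b : Fin m) :
    (-1 : R) ^ ((a + b : Fin m) : ℕ) = (-1) ^ (a : ℕ) * (-1) ^ (b : ℕ) := by
  rw [Fin.val_add, neg_one_pow_eq_pow_mod_two, Nat.mod_mod_of_dvd _ hm,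
    ← neg_one_pow_eq_pow_mod_two, pow_add]

theorem sum_neg_one_pow_mul_comp_add_right {m : ℕ} [NeZero m] (hm : 2 ∣ m) (w : Fin m → R)
    (c : Fin m) :
    ∑ i : Fin m, (-1) ^ (i : ℕ) * w (i + c) =
      (-1) ^ (c : ℕ) * ∑ i : Fin m, (-1) ^ (i : ℕ) * w i := by
  have hsign (i : Fin m) :
      (-1 : R) ^ (i : ℕ) = (-1) ^ (c : ℕ) * (-1) ^ ((i + c : Fin m) : ℕ) := by
    rw [neg_one_pow_val_add_of_two_dvd hm, mul_left_comm, ← pow_add,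
      Even.neg_one_pow ⟨_, rfl⟩, mul_one]
  calc ∑ i : Fin m, (-1) ^ (i : ℕ) * w (i + c)
      = ∑ i : Fin m, (-1) ^ (c : ℕ) * ((-1) ^ ((i + c : Fin m) : ℕ) * w (i + c)) :=
        sum_congr rfl fun i _ => by rw [hsign i, mul_assoc]
    _ = (-1) ^ (c : ℕ) * ∑ i : Fin m, (-1) ^ (i : ℕ) * w i := by
        rw [← mul_sum]
        exact congrArg _ (Equiv.sum_comp (Equiv.addRight c) fun j => (-1) ^ (j : ℕ) * w j)

theorem dotProduct_neg_one_pow_self (m : ℕ) :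
    (fun i : Fin m => (-1 : R) ^ (i : ℕ)) ⬝ᵥ (fun i => (-1) ^ (i : ℕ)) = m := by
  simp [dotProduct, ← pow_add, Even.neg_one_pow ⟨_, rfl⟩]

end AlternatingSum

theorem span_ne_top_of_forall_dotProduct_eq_zero {R n : Type*} [CommSemiring R] [Fintype n]
    {S : Set (n → R)} {v : n → R} (hv : v ⬝ᵥ v ≠ 0) (hS : ∀ y ∈ S, v ⬝ᵥ y = 0) :
    Submodule.span R S ≠ ⊤ := by
  intro htop
  have hker : Submodule.span R S ≤ LinearMap.ker (dotProductBilin R R v) :=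
    Submodule.span_le.mpr hS
  rw [htop, top_le_iff] at hker
  exact hv (LinearMap.mem_ker.mp (hker ▸ Submodule.mem_top))

theorem cycShift_apply {m : ℕ} [NeZero m] (hm : 0 < m) (k : ℕ) (v : Fin m → ℝ) (i : Fin m) :
    cycShift m hm k v i = v (i + Fin.ofNat m k) := by
  simp only [cycShift]
  congr 1
  ext
  simp [Fin.val_add]

theorem padTo_succ_apply (n : ℕ) (hn : n ≤ n + 1) (x : Fin (2 ^ n) → ℝ)
    (j : Fin (2 ^ (n + 1))) :
    padTo n (n + 1) hn x j = x ⟨j / 2, Nat.div_lt_of_lt_mul (pow_succ' 2 n ▸ j.isLt)⟩ := by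
  simp only [padTo, Nat.add_sub_cancel_left, pow_one]

theorem sum_neg_one_pow_mul_padTo_succ (n : ℕ) (hn : n ≤ n + 1) (x : Fin (2 ^ n) → ℝ) :
    ∑ j : Fin (2 ^ (n + 1)), (-1 : ℝ) ^ (j : ℕ) * padTo n (n + 1) hn x j = 0 := by
  let X : ℕ → ℝ := fun a => if h : a < 2 ^ n then x ⟨a, h⟩ else 0
  have hX (j : Fin (2 ^ (n + 1))) : padTo n (n + 1) hn x j = X (j / 2) := by
    have hj : (j : ℕ) / 2 < 2 ^ n := Nat.div_lt_of_lt_mul (by rw [← pow_succ']; exact j.isLt)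
    simp only [padTo_succ_apply, X, dif_pos hj]
  simp_rw [hX]
  rw [Fin.sum_univ_eq_sum_range (fun j => (-1 : ℝ) ^ j * X (j / 2)), pow_succ, mul_comm,
    sum_range_neg_one_pow_mul_div_two]

theorem sum_neg_one_pow_mul_cycShift_padTo_succ (n k : ℕ) (hm : 0 < 2 ^ (n + 1))
    (hn : n ≤ n + 1) (x : Fin (2 ^ n) → ℝ) :
    ∑ i : Fin (2 ^ (n + 1)), (-1 : ℝ) ^ (i : ℕ) * cycShift _ hm k (padTo n (n + 1) hn x) i =
      0 := by
  simp_rw [cycShift_apply]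
  rw [sum_neg_one_pow_mul_comp_add_right (dvd_pow_self 2 n.succ_ne_zero),
    sum_neg_one_pow_mul_padTo_succ, mul_zero]

theorem span_cycShift_padTo_succ_ne_top (n : ℕ) :
    Submodule.span ℝ {y : Fin (2 ^ (n + 1)) → ℝ |
        ∃ (k : ℕ) (x : Fin (2 ^ n) → ℝ),
          y = cycShift (2 ^ (n + 1)) (Nat.two_pow_pos _) k (padTo n (n + 1) n.le_succ x)}
      ≠ ⊤ :=
  span_ne_top_of_forall_dotProduct_eq_zero (v := fun i => (-1) ^ (i : ℕ))
    (by rw [dotProduct_neg_one_pow_self]; positivity)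
    (by rintro _ ⟨k, x, rfl⟩; exact sum_neg_one_pow_mul_cycShift_padTo_succ n k _ _ x)

/-- The consistent sequence `V n = ℝ^{2^n}` with embeddings
`x ↦ x ⊗ 𝟙₂` and the action of the cyclic groups `C_{2^n}` by cyclic shifts is not
finitely generated: for every `n`, the alternating vector `(1, -1, 1, -1, …)` of length
`2^(n+1)` is orthogonal to the span of `{g · φ_n(v) : g ∈ C_{2^(n+1)}, v ∈ ℝ^{2^n}}`,
so that span is a proper subspace of `ℝ^{2^(n+1)}`; consequently there is no degree `d`
in which the sequence is generated. -/
theorem cyclic_sequence_not_finitely_generated :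
    (∀ (n : ℕ) (k : ℕ) (x : Fin (2 ^ n) → ℝ),
      ∑ i : Fin (2 ^ (n + 1)), (-1 : ℝ) ^ (i : ℕ) *
        cycShift (2 ^ (n + 1)) (by positivity) k (padTo n (n + 1) (by omega) x) i = 0) ∧
    (∀ n : ℕ,
      Submodule.span ℝ {y : Fin (2 ^ (n + 1)) → ℝ |
          ∃ (k : ℕ) (x : Fin (2 ^ n) → ℝ),
            y = cycShift (2 ^ (n + 1)) (by positivity) k (padTo n (n + 1) (by omega) x)}
        ≠ ⊤) ∧
    (∀ d : ℕ, ¬ (∀ n, ∀ hdn : d ≤ n,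
      Submodule.span ℝ {y : Fin (2 ^ n) → ℝ |
          ∃ (k : ℕ) (x : Fin (2 ^ d) → ℝ),
            y = cycShift (2 ^ n) (by positivity) k (padTo d n hdn x)}
        = ⊤)) := by
  refine ⟨fun n k x => sum_neg_one_pow_mul_cycShift_padTo_succ n k _ _ x,
    span_cycShift_padTo_succ_ne_top, fun d h => ?_⟩
  exact span_cycShift_padTo_succ_ne_top d (h (d + 1) (by omega))
end
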